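/- arXiv:2203.09426 — 10 statements merged into one kernel-verified Lean document; each statement's English description precedes it below -/
import Mathlib

section
/- Let U ⊆ ℂ be a connected open set, let A₀,…,A₄ : U → ℂ be continuous with A₄ nowhere vanishing on U, and let Σ be an antisymmetric complex 4×4 matrix. Let Π : U → ℂ⁴ be a map whose four components are holomorphic on U and each satisfy the fourth-order linear ODE Σ_{k=0}^{4} A_k(z)·y^{(k)}(z) = 0. Assume that Π(z)ᵀ Σ Π^{(k)}(z) = 0 for all z ∈ U and for k = 0, 1, 2 (derivatives taken componentwise with respect to z). Then the holomorphic function C(z) := Π(z)ᵀ Σ Π'''(z) satisfies the first-order ODE C'(z) = −(A₃(z)/(2·A₄(z)))·C(z) for all z ∈ U. -/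
/-!
Write `W a b := Π^{(a)}ᵀ Σ Π^{(b)}`, so that `(W a b)' = W (a+1) b + W a (b+1)` and, `Σ` being
antisymmetric, `W a b = -W b a` and `W a a = 0`. Differentiating `W 0 2 = 0` twice gives
`W 1 2 + W 0 3 = 0` and then `2 W 1 3 + W 0 4 = 0`, hence `C' = W 1 3 + W 0 4 = W 0 4 / 2`.
Pairing the ODE with `Π` and using `W 0 0 = W 0 1 = W 0 2 = 0` leaves `A₃ W 0 3 + A₄ W 0 4 = 0`.
-/

open Matrix

namespace Matrix

variable {ι R : Type*} [Fintype ι]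

theorem sum_sum_mul_mul_eq_dotProduct_mulVec [CommSemiring R] (S : Matrix ι ι R) (u v : ι → R) :
    ∑ i, ∑ j, u i * S i j * v j = u ⬝ᵥ S *ᵥ v := by
  simp only [dotProduct, mulVec, Finset.mul_sum, mul_assoc]

theorem dotProduct_mulVec_eq_neg_of_transpose_eq_neg [CommRing R] {S : Matrix ι ι R}
    (hS : Sᵀ = -S) (u v : ι → R) : u ⬝ᵥ S *ᵥ v = -(v ⬝ᵥ S *ᵥ u) := by
  rw [dotProduct_mulVec, dotProduct_comm, ← mulVec_transpose, hS, neg_mulVec, dotProduct_neg]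

theorem dotProduct_mulVec_self_eq_zero_of_transpose_eq_neg [CommRing R] [NoZeroDivisors R]
    [CharZero R] {S : Matrix ι ι R} (hS : Sᵀ = -S) (u : ι → R) : u ⬝ᵥ S *ᵥ u = 0 :=
  CharZero.eq_neg_self_iff.mp (dotProduct_mulVec_eq_neg_of_transpose_eq_neg hS u u)

theorem sum_mul_dotProduct_mulVec_eq_zero {κ : Type*} [Fintype κ] [CommSemiring R]
    (S : Matrix ι ι R) (c : κ → R) (u : ι → R) (v : κ → ι → R)
    (h : ∀ i, ∑ k, c k * v k i = 0) : ∑ k, c k * (u ⬝ᵥ S *ᵥ v k) = 0 := by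
  have hv : ∑ k, c k • v k = 0 := funext fun i => by simpa using h i
  calc ∑ k, c k * (u ⬝ᵥ S *ᵥ v k) = u ⬝ᵥ S *ᵥ ∑ k, c k • v k := by
        simp only [mulVec_sum, dotProduct_sum, mulVec_smul, dotProduct_smul, smul_eq_mul]
    _ = 0 := by rw [hv, mulVec_zero, dotProduct_zero]

end Matrix

section Derivatives

variable {𝕜 ι : Type*} [NontriviallyNormedField 𝕜] [Fintype ι]

theorem HasDerivAt.dotProduct_mulVec {u v : 𝕜 → ι → 𝕜} {u' v' : ι → 𝕜} {z : 𝕜}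
    (hu : HasDerivAt u u' z) (hv : HasDerivAt v v' z) (S : Matrix ι ι 𝕜) :
    HasDerivAt (fun w => u w ⬝ᵥ S *ᵥ v w) (u' ⬝ᵥ S *ᵥ v z + u z ⬝ᵥ S *ᵥ v') z := by
  simp only [← sum_sum_mul_mul_eq_dotProduct_mulVec, ← Finset.sum_add_distrib]
  refine HasDerivAt.fun_sum fun i _ => HasDerivAt.fun_sum fun j _ => ?_
  exact ((hasDerivAt_pi.mp hu i).mul_const (S i j)).mul (hasDerivAt_pi.mp hv j)

theorem HasDerivAt.eq_zero_of_eqOn_zero {f : 𝕜 → 𝕜} {f' z : 𝕜} {U : Set 𝕜} (hf : HasDerivAt f f' z)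
    (hU : IsOpen U) (hz : z ∈ U) (h0 : Set.EqOn f 0 U) : f' = 0 :=
  hf.unique <| (hasDerivAt_const z 0).congr_of_eventuallyEq <|
    Filter.mem_of_superset (hU.mem_nhds hz) h0

variable {U : Set 𝕜} {S : Matrix ι ι 𝕜} {Φ : ℕ → 𝕜 → ι → 𝕜}

theorem hasDerivAt_dotProduct_mulVec_three [CharZero 𝕜] (hU : IsOpen U) (hS : Sᵀ = -S)
    (hΦ : ∀ n, ∀ z ∈ U, HasDerivAt (Φ n) (Φ (n + 1) z) z)
    (h02 : Set.EqOn (fun w => Φ 0 w ⬝ᵥ S *ᵥ Φ 2 w) 0 U) {z : 𝕜} (hz : z ∈ U) :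
    HasDerivAt (fun w => Φ 0 w ⬝ᵥ S *ᵥ Φ 3 w) (Φ 0 z ⬝ᵥ S *ᵥ Φ 4 z / 2) z := by
  have hW : ∀ a b, ∀ w ∈ U, HasDerivAt (fun w => Φ a w ⬝ᵥ S *ᵥ Φ b w)
      (Φ (a + 1) w ⬝ᵥ S *ᵥ Φ b w + Φ a w ⬝ᵥ S *ᵥ Φ (b + 1) w) w :=
    fun a b w hw => (hΦ a w hw).dotProduct_mulVec (hΦ b w hw) S
  have h12 : Set.EqOn (fun w => Φ 1 w ⬝ᵥ S *ᵥ Φ 2 w + Φ 0 w ⬝ᵥ S *ᵥ Φ 3 w) 0 U :=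
    fun w hw => (hW 0 2 w hw).eq_zero_of_eqOn_zero hU hw h02
  have h13 := ((hW 1 2 z hz).add (hW 0 3 z hz)).eq_zero_of_eqOn_zero hU hz h12
  have h22 := dotProduct_mulVec_self_eq_zero_of_transpose_eq_neg hS (Φ 2 z)
  refine (hW 0 3 z hz).congr_deriv ?_
  linear_combination (1 / 2 : 𝕜) * h13 - (1 / 2 : 𝕜) * h22

end Derivatives

-- Not `iteratedDeriv n P`, which is `0` wherever some component of `P` fails to be differentiable.
noncomputable def iteratedDerivComponentwise {𝕜 ι : Type*} [NontriviallyNormedField 𝕜]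
    (n : ℕ) (P : 𝕜 → ι → 𝕜) (z : 𝕜) : ι → 𝕜 :=
  fun i => iteratedDeriv n (fun w => P w i) z

theorem hasDerivAt_iteratedDerivComponentwise {ι : Type*} [Fintype ι] {U : Set ℂ}
    {P : ℂ → ι → ℂ} (hU : IsOpen U) (hP : ∀ i, DifferentiableOn ℂ (fun z => P z i) U)
    (n : ℕ) {z : ℂ} (hz : z ∈ U) :
    HasDerivAt (iteratedDerivComponentwise n P) (iteratedDerivComponentwise (n + 1) P z) z := by
  refine hasDerivAt_pi.mpr fun i => ?_
  have han := ((hP i).analyticOnNhd hU).iterated_deriv n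
  simp only [iteratedDerivComponentwise, iteratedDeriv_succ, iteratedDeriv_eq_iterate] at han ⊢
  exact (han z hz).differentiableAt.hasDerivAt

theorem yukawa_first_order_ode_general
    (U : Set ℂ) (hUopen : IsOpen U)
    (A : Fin 5 → ℂ → ℂ)
    (hA4 : ∀ z ∈ U, A 4 z ≠ 0)
    (S : Matrix (Fin 4) (Fin 4) ℂ) (hS : S.transpose = -S)
    (P : ℂ → Fin 4 → ℂ)
    (hP : ∀ i, DifferentiableOn ℂ (fun z => P z i) U)
    (hODE : ∀ i, ∀ z ∈ U,
      ∑ k : Fin 5, A k z * iteratedDeriv (k : ℕ) (fun w => P w i) z = 0)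
    (hPair : ∀ k : ℕ, k ≤ 2 → ∀ z ∈ U,
      ∑ i, ∑ j, P z i * S i j * iteratedDeriv k (fun w => P w j) z = 0) :
    ∀ z ∈ U,
      HasDerivAt (fun w => ∑ i, ∑ j, P w i * S i j * iteratedDeriv 3 (fun v => P v j) w)
        (-(A 3 z / (2 * A 4 z)) *
          ∑ i, ∑ j, P z i * S i j * iteratedDeriv 3 (fun v => P v j) z) z := by
  intro z hz
  set Φ := fun n => iteratedDerivComponentwise n P
  have hΦ0 : Φ 0 = P := by funext w i; simp [Φ, iteratedDerivComponentwise]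
  have hW : ∀ k, ∀ w, ∑ i, ∑ j, P w i * S i j * iteratedDeriv k (fun v => P v j) w
      = Φ 0 w ⬝ᵥ S *ᵥ Φ k w := fun k w => by
    rw [hΦ0, sum_sum_mul_mul_eq_dotProduct_mulVec]; rfl
  simp only [hW] at hPair ⊢
  have hC : HasDerivAt (fun w => Φ 0 w ⬝ᵥ S *ᵥ Φ 3 w) (Φ 0 z ⬝ᵥ S *ᵥ Φ 4 z / 2) z :=
    hasDerivAt_dotProduct_mulVec_three hUopen hS
      (fun n w hw => hasDerivAt_iteratedDerivComponentwise hUopen hP n hw)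
      (fun w hw => hPair 2 le_rfl w hw) hz
  have hode := sum_mul_dotProduct_mulVec_eq_zero S (fun k : Fin 5 => A k z) (Φ 0 z)
    (fun k => Φ k z) (fun i => hODE i z hz)
  simp only [Fin.sum_univ_five, Fin.isValue, Fin.coe_ofNat_eq_mod, Nat.reduceMod,
    hPair 0 (by norm_num) z hz, hPair 1 (by norm_num) z hz, hPair 2 le_rfl z hz] at hode
  refine hC.congr_deriv ?_
  field_simp [hA4 z hz]
  linear_combination hode

/-- Let `U ⊆ ℂ` be a connected open set, `A₀,…,A₄ : U → ℂ` continuous with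
`A₄` nowhere vanishing on `U`, and `Σ` an antisymmetric complex `4×4` matrix.  Let `Π : U → ℂ⁴`
have holomorphic components, each satisfying `∑_{k=0}^4 A_k(z)·y^{(k)}(z) = 0`.  If
`Π(z)ᵀ Σ Π^{(k)}(z) = 0` on `U` for `k = 0, 1, 2`, then `C(z) := Π(z)ᵀ Σ Π'''(z)` satisfies
`C'(z) = −(A₃(z)/(2·A₄(z)))·C(z)` on `U`. -/
theorem yukawa_first_order_ode
    (U : Set ℂ) (hUopen : IsOpen U) (hUconn : IsConnected U)
    (A : Fin 5 → ℂ → ℂ) (hAcont : ∀ k, ContinuousOn (A k) U)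
    (hA4 : ∀ z ∈ U, A 4 z ≠ 0)
    (S : Matrix (Fin 4) (Fin 4) ℂ) (hS : S.transpose = -S)
    (P : ℂ → Fin 4 → ℂ)
    (hP : ∀ i, DifferentiableOn ℂ (fun z => P z i) U)
    (hODE : ∀ i, ∀ z ∈ U,
      ∑ k : Fin 5, A k z * iteratedDeriv (k : ℕ) (fun w => P w i) z = 0)
    (hPair : ∀ k : ℕ, k ≤ 2 → ∀ z ∈ U,
      ∑ i, ∑ j, P z i * S i j * iteratedDeriv k (fun w => P w j) z = 0) :
    ∀ z ∈ U,
      HasDerivAt (fun w => ∑ i, ∑ j, P w i * S i j * iteratedDeriv 3 (fun v => P v j) w)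
        (-(A 3 z / (2 * A 4 z)) *
          ∑ i, ∑ j, P z i * S i j * iteratedDeriv 3 (fun v => P v j) z) z :=
  yukawa_first_order_ode_general U hUopen A hA4 S hS P hP hODE hPair
end

section
/- (Bol's identity.) Let k ≥ 2 be an integer, let f : ℍ → ℂ be holomorphic on the complex upper half-plane ℍ, and let g = (a b; c d) ∈ SL(2, ℝ). Then for all τ ∈ ℍ, the (k−1)-st derivative of the weight-(2−k) slash f|_{2−k} g equals the weight-k slash of the (k−1)-st derivative of f: d^{k−1}/dτ^{k−1} ( (f|_{2−k} g)(τ) ) = ( (d^{k−1}f/dτ^{k−1}) |_k g )(τ). -/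
/-! Differentiating `F|_w g` gives two terms: the factor `(cτ + d)^(-w)` contributes
`-w c (F|_{w+1} g)`, and the chain rule, with `g'(τ) = (cτ + d)^(-2)`, contributes `F'|_{w+2} g`.
Iterating, the `m`-th derivative of `F|_w g` is `∑ⱼ A(-w, m, j) c^(m-j) (F⁽ʲ⁾|_{w+m+j} g)`, where
`A(x, m, j) = binom(m, j) (x - j)(x - j - 1)⋯(x - m + 1)` (`bolCoeff`). For `w = 2 - k` and
`m = k - 1` every coefficient with `j < m` contains the factor `x - (k - 2) = 0`, leaving only
`F⁽ᵐ⁾|_k g`. -/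

open Complex Finset

/-- The weight-`w` slash action of the real matrix `(a b; c d)` on functions `ℂ → ℂ`:
`(F|_w g)(τ) = (cτ+d)^(−w) · F((aτ+b)/(cτ+d))`. -/
noncomputable def slash (w : ℤ) (a b c d : ℝ) (F : ℂ → ℂ) : ℂ → ℂ :=
  fun τ => ((c : ℂ) * τ + (d : ℂ)) ^ (-w) * F (((a : ℂ) * τ + (b : ℂ)) / ((c : ℂ) * τ + (d : ℂ)))

section Coefficients

variable {R : Type*} [CommRing R]

def bolCoeff (x : R) (m j : ℕ) : R :=
  (m.choose j : R) * ∏ i ∈ Ico j m, (x - i)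

lemma bolCoeff_of_lt (x : R) {m j : ℕ} (h : m < j) : bolCoeff x m j = 0 := by
  simp [bolCoeff, Nat.choose_eq_zero_of_lt h]

lemma bolCoeff_self (x : R) (m : ℕ) : bolCoeff x m m = 1 := by
  simp [bolCoeff]

lemma bolCoeff_natCast_eq_zero {i j m : ℕ} (hj : j ≤ i) (hi : i < m) :
    bolCoeff (i : R) m j = 0 := by
  rw [bolCoeff, prod_eq_zero (mem_Ico.2 ⟨hj, hi⟩) (sub_self _), mul_zero]

lemma bolCoeff_succ_zero (x : R) (m : ℕ) : bolCoeff x (m + 1) 0 = (x - m) * bolCoeff x m 0 := by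
  simp only [bolCoeff, Nat.choose_zero_right, Nat.cast_one, one_mul]
  rw [prod_Ico_succ_top (Nat.zero_le m), mul_comm]

lemma bolCoeff_succ_succ (x : R) (m j : ℕ) :
    bolCoeff x (m + 1) (j + 1) = (x - m - (j + 1)) * bolCoeff x m (j + 1) + bolCoeff x m j := by
  rcases lt_trichotomy j m with h | rfl | h
  · have hchoose := congrArg (Nat.cast : ℕ → R) (Nat.choose_succ_right_eq m j)
    rw [bolCoeff, bolCoeff, bolCoeff, prod_Ico_succ_top h, prod_eq_prod_Ico_succ_bot h,
      Nat.choose_succ_succ]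
    push_cast [Nat.cast_sub h.le] at hchoose ⊢
    linear_combination (∏ i ∈ Ico (j + 1) m, (x - i)) * hchoose
  · simp [bolCoeff, Nat.choose_succ_self]
  · simp [bolCoeff_of_lt x h, bolCoeff_of_lt x (Nat.lt_succ_of_lt h),
      bolCoeff_of_lt x (Nat.succ_lt_succ h)]

lemma sum_bolCoeff_succ_mul (x : R) (m : ℕ) (P : ℕ → R) :
    ∑ j ∈ range (m + 2), bolCoeff x (m + 1) j * P j
      = ∑ j ∈ range (m + 1), bolCoeff x m j * ((x - m - j) * P j + P (j + 1)) := by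
  have hshift : ∑ j ∈ range (m + 1), bolCoeff x m j * ((x - m - j) * P j)
      = ∑ j ∈ range (m + 1), (x - m - (j + 1)) * bolCoeff x m (j + 1) * P (j + 1)
        + (x - m) * bolCoeff x m 0 * P 0 := by
    have h := sum_range_succ' (fun j : ℕ => bolCoeff x m j * ((x - m - j) * P j)) (m + 1)
    rw [sum_range_succ, bolCoeff_of_lt x (Nat.lt_succ_self m), zero_mul, add_zero] at h
    rw [h]
    push_cast
    congr 1
    · exact sum_congr rfl fun j _ => by ring
    · ring
  rw [sum_range_succ']
  simp only [bolCoeff_succ_succ, bolCoeff_succ_zero, add_mul, sum_add_distrib, mul_add, hshift]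
  ring

end Coefficients

section Moebius

variable {a b c d : ℝ} {τ : ℂ}

lemma ofReal_mul_add_ofReal_ne_zero (hdet : a * d - b * c ≠ 0) (hτ : τ.im ≠ 0) :
    (c : ℂ) * τ + d ≠ 0 := by
  intro h
  have hc : c = 0 := by
    simpa [hτ] using congrArg Complex.im h
  have hd : d = 0 := by
    simpa [hc] using congrArg Complex.re h
  simp [hc, hd] at hdet

lemma im_moebius :
    (((a : ℂ) * τ + b) / ((c : ℂ) * τ + d)).im
      = (a * d - b * c) * τ.im / Complex.normSq ((c : ℂ) * τ + d) := by
  rw [Complex.div_im, div_sub_div_same]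
  congr 1
  simp only [add_re, add_im, mul_re, mul_im, ofReal_re, ofReal_im]
  ring

lemma im_moebius_pos (hdet : 0 < a * d - b * c) (hτ : 0 < τ.im) :
    0 < (((a : ℂ) * τ + b) / ((c : ℂ) * τ + d)).im := by
  rw [im_moebius]
  have hden := ofReal_mul_add_ofReal_ne_zero hdet.ne' hτ.ne'
  exact div_pos (mul_pos hdet hτ) (Complex.normSq_pos.2 hden)

end Moebius

lemma hasDerivAt_moebius {a b c d τ : ℂ} (hτ : c * τ + d ≠ 0) :
    HasDerivAt (fun z => (a * z + b) / (c * z + d)) ((a * d - b * c) / (c * τ + d) ^ 2) τ := by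
  have hnum : HasDerivAt (fun z => a * z + b) a τ := by
    simpa using ((hasDerivAt_id τ).const_mul a).add_const b
  have hden : HasDerivAt (fun z => c * z + d) c τ := by
    simpa using ((hasDerivAt_id τ).const_mul c).add_const d
  exact (hnum.div hden hτ).congr_deriv (by ring)

lemma hasDerivAt_slash {w : ℤ} {a b c d : ℝ} (hdet : a * d - b * c = 1) {F : ℂ → ℂ} {τ : ℂ}
    (hτ : (c : ℂ) * τ + d ≠ 0) (hF : DifferentiableAt ℂ F (((a : ℂ) * τ + b) / ((c : ℂ) * τ + d))) :
    HasDerivAt (slash w a b c d F)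
      (-w * c * slash (w + 1) a b c d F τ + slash (w + 2) a b c d (deriv F) τ) τ := by
  have hdetC : (a : ℂ) * d - b * c = 1 := by exact_mod_cast hdet
  have hfactor : HasDerivAt (fun z : ℂ => ((c : ℂ) * z + d) ^ (-w))
      ((-w : ℤ) * ((c : ℂ) * τ + d) ^ (-w - 1) * c) τ := by
    have hlin : HasDerivAt (fun z : ℂ => (c : ℂ) * z + d) c τ := by
      simpa using ((hasDerivAt_id τ).const_mul (c : ℂ)).add_const (d : ℂ)
    exact (hasDerivAt_zpow (-w) _ (Or.inl hτ)).comp τ hlin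
  have hcomp := hF.hasDerivAt.comp τ (hasDerivAt_moebius (a := (a : ℂ)) (b := b) hτ)
  refine (hfactor.mul hcomp).congr_deriv ?_
  simp only [slash, Function.comp_apply, hdetC, neg_add', zpow_sub₀ hτ, zpow_one, zpow_two]
  push_cast
  ring

lemma DifferentiableOn.iteratedDeriv_of_isOpen {F : ℂ → ℂ} {U : Set ℂ}
    (hF : DifferentiableOn ℂ F U) (hU : IsOpen U) (j : ℕ) :
    DifferentiableOn ℂ (iteratedDeriv j F) U := by
  induction j with
  | zero => simpa using hF
  | succ j ih => simpa only [iteratedDeriv_succ] using ih.deriv hU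

theorem iteratedDeriv_slash {a b c d : ℝ} (hdet : a * d - b * c = 1) {F : ℂ → ℂ}
    (hF : DifferentiableOn ℂ F {τ : ℂ | 0 < τ.im}) (w : ℤ) (m : ℕ) {τ : ℂ} (hτ : 0 < τ.im) :
    iteratedDeriv m (slash w a b c d F) τ
      = ∑ j ∈ range (m + 1), bolCoeff (-(w : ℂ)) m j * (c : ℂ) ^ (m - j)
          * slash (w + m + j) a b c d (iteratedDeriv j F) τ := by
  induction m generalizing τ with
  | zero => simp [bolCoeff_self]
  | succ m ih =>
    have hden : (c : ℂ) * τ + d ≠ 0 :=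
      ofReal_mul_add_ofReal_ne_zero (hdet ▸ one_ne_zero) hτ.ne'
    have hmoeb := im_moebius_pos (a := a) (b := b) (hdet ▸ one_pos) hτ
    have hterm : ∀ j ∈ range (m + 1), HasDerivAt
        (fun z => bolCoeff (-(w : ℂ)) m j * (c : ℂ) ^ (m - j)
          * slash (w + m + j) a b c d (iteratedDeriv j F) z)
        (bolCoeff (-(w : ℂ)) m j * (c : ℂ) ^ (m - j)
          * (-((w + m + j : ℤ) : ℂ) * c * slash (w + m + j + 1) a b c d (iteratedDeriv j F) τ
            + slash (w + m + j + 2) a b c d (iteratedDeriv (j + 1) F) τ)) τ := by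
      intro j _
      have hFj := (hF.iteratedDeriv_of_isOpen UpperHalfPlane.isOpen_upperHalfPlaneSet j)
        |>.differentiableAt (UpperHalfPlane.isOpen_upperHalfPlaneSet.mem_nhds hmoeb)
      rw [iteratedDeriv_succ]
      exact (hasDerivAt_slash hdet hden hFj).const_mul _
    have hlocal : iteratedDeriv m (slash w a b c d F) =ᶠ[nhds τ] fun z =>
        ∑ j ∈ range (m + 1), bolCoeff (-(w : ℂ)) m j * (c : ℂ) ^ (m - j)
          * slash (w + m + j) a b c d (iteratedDeriv j F) z :=
      Filter.eventuallyEq_of_mem (UpperHalfPlane.isOpen_upperHalfPlaneSet.mem_nhds hτ)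
        fun z hz => ih hz
    rw [iteratedDeriv_succ, hlocal.deriv_eq, (HasDerivAt.fun_sum hterm).deriv]
    simp only [mul_assoc (bolCoeff _ _ _)]
    rw [sum_bolCoeff_succ_mul]
    refine sum_congr rfl fun j hj => ?_
    have hjm : j ≤ m := Nat.lt_succ_iff.1 (mem_range.1 hj)
    rw [Nat.succ_sub hjm, Nat.succ_sub_succ, pow_succ]
    push_cast
    rw [show w + ((m : ℤ) + 1) + j = w + m + j + 1 by ring,
      show w + ((m : ℤ) + 1) + (j + 1) = w + m + j + 2 by ring]
    ring

/-- **Bol's identity.** For `k ≥ 2`, `f` holomorphic on the upper half-plane and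
`g = (a b; c d) ∈ SL(2, ℝ)`, one has
`d^{k−1}/dτ^{k−1}(f|_{2−k} g) = (d^{k−1}f/dτ^{k−1})|_k g` on the upper half-plane. -/
theorem bol_identity (k : ℕ) (hk : 2 ≤ k)
    (f : ℂ → ℂ) (hf : DifferentiableOn ℂ f {τ : ℂ | 0 < τ.im})
    (a b c d : ℝ) (hdet : a * d - b * c = 1) :
    ∀ τ : ℂ, 0 < τ.im →
      iteratedDeriv (k - 1) (slash (2 - (k : ℤ)) a b c d f) τ
        = slash (k : ℤ) a b c d (iteratedDeriv (k - 1) f) τ := by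
  intro τ hτ
  have hx : -((2 - (k : ℤ) : ℤ) : ℂ) = ((k - 2 : ℕ) : ℂ) := by
    push_cast [Nat.cast_sub hk]
    ring
  have hweight : 2 - (k : ℤ) + (k - 1 : ℕ) + (k - 1 : ℕ) = k := by
    push_cast [Nat.cast_sub (one_le_two.trans hk)]
    ring
  rw [iteratedDeriv_slash hdet hf _ _ hτ, hx,
    sum_eq_single_of_mem (k - 1) (self_mem_range_succ _) ?_, bolCoeff_self, Nat.sub_self,
    pow_zero, one_mul, one_mul, hweight]
  intro j hj hjk
  have := mem_range.1 hj
  rw [bolCoeff_natCast_eq_zero (by omega) (by omega), zero_mul, zero_mul]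
end

section
/- Let k ≥ 2 be an integer and let (a_m)_{m≥1} be complex numbers with Σ_{m≥1} |a_m| r^m < ∞ for every 0 < r < 1. Define f(τ) = Σ_{m≥1} a_m e^{2πimτ} and f̃_∞(τ) = Σ_{m≥1} (a_m / m^{k−1}) e^{2πimτ} for τ ∈ ℍ. Then for every τ₀ ∈ ℍ and every τ ∈ ℍ, f̃_∞(τ) − f̃_{τ₀}(τ) = ((2πi)^{k−1}/(k−1)!) · ∫_{τ₀}^{τ₀−1} B_{k−1}(τ − z) f(z) dz, where B_{k−1} is the (k−1)-st Bernoulli polynomial and the integral is along any path in ℍ. -/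
/-!
Expand `f` into the modes `e^{wz}`, `w = 2πim`; on a segment in `ℍ` they are bounded by `r^m`
for some `r < 1`, so both integrals can be taken termwise. For one mode, `Q(τ - z) e^{wz}` with
`Q = ∑ᵢ w^{-(i+1)} P⁽ⁱ⁾` is a primitive of `P(τ - z) e^{wz}`. Since `e^{wz}` has period `1` and
`B_{n+1}(x + 1) - B_{n+1}(x) = (n + 1) xⁿ`, the Bernoulli integral over `[τ₀, τ₀ - 1]` equals
`(n + 1) Q_{Xⁿ}(τ - τ₀) e^{wτ₀}`, which cancels the lower boundary term of the Eichler integral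
and leaves `n! e^{wτ}/w^{n+1}`.
-/

open Complex

/-- The integral of `g` along the straight segment from `z₀` to `z₁`. -/
noncomputable def segInt (g : ℂ → ℂ) (z₀ z₁ : ℂ) : ℂ :=
  ∫ t in (0:ℝ)..1, g (z₀ + (t : ℂ) * (z₁ - z₀)) * (z₁ - z₀)

/-- The Eichler integral `f̃_{τ₀}(τ) = ((2πi)^{k−1}/(k−2)!) ∫_{τ₀}^{τ} (τ−z)^{k−2} f(z) dz`. -/
noncomputable def eichler (k : ℕ) (f : ℂ → ℂ) (τ₀ τ : ℂ) : ℂ :=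
  (2 * (Real.pi : ℂ) * Complex.I) ^ (k - 1) / (Nat.factorial (k - 2) : ℂ) *
    segInt (fun z => (τ - z) ^ (k - 2) * f z) τ₀ τ

open Polynomial MeasureTheory Set Real

namespace Polynomial

variable {K : Type*} [Field K]

theorem natDegree_bernoulli_le (n : ℕ) : (bernoulli n).natDegree ≤ n :=
  natDegree_sum_le_of_forall_le _ _ fun i _ => (natDegree_monomial_le _).trans (Nat.sub_le n i)

theorem taylor_one_bernoulli (n : ℕ) : taylor 1 (bernoulli n) = bernoulli n + n • X ^ (n - 1) := by
  rw [taylor_apply, map_one, add_comm, bernoulli_comp_one_add_X]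

theorem derivative_taylor (r : K) (P : K[X]) :
    derivative (taylor r P) = taylor r (derivative P) := by
  simp [taylor_apply, derivative_comp]

noncomputable def expPrimitive (w : K) (N : ℕ) : Module.End K K[X] :=
  ∑ i ∈ Finset.range N, (w ^ (i + 1))⁻¹ • derivative ^ i

theorem expPrimitive_apply (w : K) (N : ℕ) (P : K[X]) :
    expPrimitive w N P = ∑ i ∈ Finset.range N, (w ^ (i + 1))⁻¹ • derivative^[i] P := by
  simp [expPrimitive, Module.End.pow_apply]

theorem smul_expPrimitive_sub_derivative {w : K} (hw : w ≠ 0) {N : ℕ} {P : K[X]}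
    (hP : derivative^[N] P = 0) :
    w • expPrimitive w N P - derivative (expPrimitive w N P) = P := by
  have htel := Finset.sum_range_sub' (fun i => (w ^ i)⁻¹ • derivative^[i] P) N
  simp only [pow_zero, inv_one, one_smul, Function.iterate_zero_apply, hP, smul_zero,
    sub_zero] at htel
  conv_rhs => rw [← htel]
  rw [expPrimitive_apply, Finset.smul_sum, map_sum, ← Finset.sum_sub_distrib]
  refine Finset.sum_congr rfl fun i _ => ?_
  rw [smul_smul, derivative_smul, ← Function.iterate_succ_apply' derivative]
  congr 2
  field_simp
  ring

theorem commute_taylor_expPrimitive (r w : K) (N : ℕ) : Commute (taylor r) (expPrimitive w N) := by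
  have h : Commute (taylor r) derivative := LinearMap.ext fun P => (derivative_taylor r P).symm
  exact Commute.sum_right _ _ _ fun i _ => (h.pow_right i).smul_right _

theorem expPrimitive_X_pow_eval_zero {w : K} {n N : ℕ} (hn : n < N) :
    (expPrimitive w N (X ^ n)).eval 0 = n.factorial / w ^ (n + 1) := by
  rw [expPrimitive_apply, eval_finsetSum, Finset.sum_eq_single_of_mem n (Finset.mem_range.2 hn)]
  · simp [iterate_derivative_X_pow_eq_smul, div_eq_inv_mul, Nat.descFactorial_self]
  · intro i _ hin
    rcases lt_or_gt_of_ne hin with hlt | hgt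
    · simp [iterate_derivative_X_pow_eq_smul, (Nat.sub_pos_of_lt hlt).ne']
    · simp [iterate_derivative_eq_zero ((natDegree_X_pow_le n).trans_lt hgt)]

theorem expPrimitive_bernoulli_eval_add_one [CharZero K] (w : K) (N n : ℕ) (x : K) :
    (expPrimitive w N ((bernoulli (n + 1)).map (algebraMap ℚ K))).eval (x + 1)
      - (expPrimitive w N ((bernoulli (n + 1)).map (algebraMap ℚ K))).eval x
      = (n + 1) * (expPrimitive w N (X ^ n)).eval x := by
  have hshift : taylor (1 : K) ((bernoulli (n + 1)).map (algebraMap ℚ K))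
      - (bernoulli (n + 1)).map (algebraMap ℚ K) = (n + 1 : K) • X ^ n := by
    rw [← map_one (algebraMap ℚ K), ← map_taylor, taylor_one_bernoulli, Polynomial.map_add,
      add_sub_cancel_left, nsmul_eq_mul, smul_eq_C_mul]
    simp
  rw [← taylor_eval, ← eval_sub, ← LinearMap.comp_apply, ← Module.End.mul_eq_comp,
    (commute_taylor_expPrimitive 1 w N).eq, Module.End.mul_eq_comp, LinearMap.comp_apply,
    ← map_sub, hshift, map_smul, eval_smul, smul_eq_mul]

end Polynomial

theorem segInt_eq_sub_of_hasDerivAt {g G : ℂ → ℂ} (hG : ∀ z, HasDerivAt G (g z) z)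
    (hg : Continuous g) (z₀ z₁ : ℂ) : segInt g z₀ z₁ = G z₁ - G z₀ := by
  have hpath (t : ℝ) : HasDerivAt (fun s : ℝ => z₀ + s * (z₁ - z₀)) (z₁ - z₀) t := by
    simpa using (((hasDerivAt_id (t : ℂ)).mul_const (z₁ - z₀)).const_add z₀).comp_ofReal
  have hint : IntervalIntegrable (fun t : ℝ => g (z₀ + t * (z₁ - z₀)) * (z₁ - z₀)) volume 0 1 :=
    ((hg.comp (by fun_prop)).mul continuous_const).intervalIntegrable 0 1
  simpa [segInt] using intervalIntegral.integral_eq_sub_of_hasDerivAt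
    (fun t _ => (hG _).comp t (hpath t)) hint

theorem segInt_const_mul (c : ℂ) (g : ℂ → ℂ) (z₀ z₁ : ℂ) :
    segInt (fun z => c * g z) z₀ z₁ = c * segInt g z₀ z₁ := by
  simp only [segInt, mul_assoc, intervalIntegral.integral_const_mul]

theorem hasSum_segInt {ι : Type*} [Countable ι] {F : ι → ℂ → ℂ} (hF : ∀ i, Continuous (F i))
    {c : ι → ℝ} (hc : Summable c) {z₀ z₁ : ℂ}
    (hbound : ∀ i, ∀ t ∈ Icc (0 : ℝ) 1, ‖F i (z₀ + t * (z₁ - z₀))‖ ≤ c i) :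
    HasSum (fun i => segInt (F i) z₀ z₁) (segInt (fun z => ∑' i, F i z) z₀ z₁) := by
  have hbound' (i : ι) (t : ℝ) (ht : t ∈ uIoc (0 : ℝ) 1) :
      ‖F i (z₀ + t * (z₁ - z₀)) * (z₁ - z₀)‖ ≤ c i * ‖z₁ - z₀‖ := by
    rw [norm_mul]
    gcongr
    exact hbound i t (Ioc_subset_Icc_self (by simpa using ht))
  simp only [segInt, ← tsum_mul_right]
  refine intervalIntegral.hasSum_integral_of_dominated_convergence (fun i _ => c i * ‖z₁ - z₀‖)
    (fun i => ((hF i).comp (by fun_prop)).mul continuous_const |>.aestronglyMeasurable)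
    (fun i => ae_of_all _ (hbound' i)) (ae_of_all _ fun _ _ => hc.mul_right _)
    intervalIntegrable_const (ae_of_all _ fun t ht => ?_)
  exact (Summable.of_norm_bounded (hc.mul_right _) fun i => hbound' i t ht).hasSum

theorem segInt_eval_mul_exp {w : ℂ} (hw : w ≠ 0) {N : ℕ} {P : ℂ[X]} (hP : derivative^[N] P = 0)
    (τ z₀ z₁ : ℂ) :
    segInt (fun z => P.eval (τ - z) * cexp (w * z)) z₀ z₁
      = (expPrimitive w N P).eval (τ - z₁) * cexp (w * z₁)
        - (expPrimitive w N P).eval (τ - z₀) * cexp (w * z₀) := by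
  set Q := expPrimitive w N P
  refine segInt_eq_sub_of_hasDerivAt (G := fun z => Q.eval (τ - z) * cexp (w * z)) (fun z => ?_)
    ((P.continuous.comp (continuous_sub_left τ)).mul (by fun_prop)) z₀ z₁
  have hQ : HasDerivAt (fun z => Q.eval (τ - z)) (-(derivative Q).eval (τ - z)) z := by
    have := (Q.hasDerivAt (τ - z)).comp z ((hasDerivAt_id z).const_sub τ)
    rwa [mul_neg_one] at this
  have hexp : HasDerivAt (fun z => cexp (w * z)) (cexp (w * z) * w) z := by
    simpa using ((hasDerivAt_id z).const_mul w).cexp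
  refine (hQ.mul hexp).congr_deriv ?_
  have hPQ := congrArg (eval (τ - z)) (smul_expPrimitive_sub_derivative hw hP)
  rw [eval_sub, eval_smul, smul_eq_mul] at hPQ
  simp only [Function.comp_apply, Pi.mul_apply, ← hPQ]
  ring

theorem segInt_pow_mul_exp_add_segInt_bernoulli_mul_exp {w : ℂ} (hw : w ≠ 0) (hw1 : cexp w = 1)
    (n : ℕ) (τ τ₀ : ℂ) :
    segInt (fun z => (τ - z) ^ n * cexp (w * z)) τ₀ τ / n.factorial
      + segInt (fun z => aeval (τ - z) (bernoulli (n + 1)) * cexp (w * z)) τ₀ (τ₀ - 1)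
        / (n + 1).factorial
      = cexp (w * τ) / w ^ (n + 1) := by
  set B : ℂ[X] := (Polynomial.bernoulli (n + 1)).map (algebraMap ℚ ℂ)
  have hX : derivative^[n + 2] (X ^ n : ℂ[X]) = 0 :=
    iterate_derivative_eq_zero ((natDegree_X_pow_le n).trans_lt (by omega))
  have hB : derivative^[n + 2] B = 0 := iterate_derivative_eq_zero
    ((natDegree_map_le.trans (natDegree_bernoulli_le (n + 1))).trans_lt (Nat.lt_succ_self _))
  have h₁ := segInt_eval_mul_exp hw hX τ τ₀ τ
  have h₂ := segInt_eval_mul_exp hw hB τ τ₀ (τ₀ - 1)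
  simp only [eval_pow, eval_X] at h₁
  simp only [B, eval_map_algebraMap] at h₂
  have hper : cexp (w * (τ₀ - 1)) = cexp (w * τ₀) := by
    rw [mul_sub, mul_one, Complex.exp_sub, hw1, div_one]
  rw [h₁, h₂, hper, sub_self, expPrimitive_X_pow_eval_zero (by omega),
    show τ - (τ₀ - 1) = τ - τ₀ + 1 by ring, ← sub_mul,
    expPrimitive_bernoulli_eval_add_one, Nat.factorial_succ]
  have hfac : (n.factorial : ℂ) ≠ 0 := Nat.cast_ne_zero.2 n.factorial_ne_zero
  push_cast
  field_simp
  ring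

theorem min_im_le_im_segment {z₀ z₁ : ℂ} {t : ℝ} (ht : t ∈ Icc (0 : ℝ) 1) :
    min z₀.im z₁.im ≤ (z₀ + t * (z₁ - z₀)).im := by
  have him : (z₀ + t * (z₁ - z₀)).im = (1 - t) * z₀.im + t * z₁.im := by simp; ring
  rw [him]
  nlinarith [ht.1, ht.2, min_le_left z₀.im z₁.im, min_le_right z₀.im z₁.im]

theorem norm_exp_two_pi_I_mul_le {z : ℂ} {δ : ℝ} (hδ : δ ≤ z.im) (m : ℕ) :
    ‖cexp (2 * π * I * ((m : ℂ) + 1) * z)‖ ≤ Real.exp (-(2 * π * δ)) ^ (m + 1) := by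
  have hre : (2 * π * I * ((m : ℂ) + 1) * z).re = (m + 1 : ℕ) * (-(2 * π * z.im)) := by
    simp [Complex.mul_re, Complex.mul_im]
    ring
  rw [Complex.norm_exp, hre, Real.exp_nat_mul]
  gcongr

theorem hasSum_segInt_mul_fourier {g : ℂ → ℂ} (hg : Continuous g) {a : ℕ → ℂ}
    (ha : ∀ r : ℝ, 0 < r → r < 1 → Summable (fun m : ℕ => ‖a (m + 1)‖ * r ^ (m + 1)))
    {z₀ z₁ : ℂ} (h₀ : 0 < z₀.im) (h₁ : 0 < z₁.im) :
    HasSum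
      (fun m : ℕ => a (m + 1) * segInt (fun z => g z * cexp (2 * π * I * ((m : ℂ) + 1) * z)) z₀ z₁)
      (segInt (fun z => g z * ∑' m : ℕ, a (m + 1) * cexp (2 * π * I * ((m : ℂ) + 1) * z))
        z₀ z₁) := by
  set r := Real.exp (-(2 * π * min z₀.im z₁.im))
  have hr1 : r < 1 := Real.exp_lt_one_iff.2 (by nlinarith [Real.pi_pos, lt_min h₀ h₁])
  obtain ⟨M, hM⟩ := isCompact_Icc.exists_bound_of_continuousOn
    (f := fun t : ℝ => g (z₀ + t * (z₁ - z₀))) (hg.comp (by fun_prop)).continuousOn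
  have hseries : (fun z => g z * ∑' m : ℕ, a (m + 1) * cexp (2 * π * I * ((m : ℂ) + 1) * z))
      = fun z => ∑' m : ℕ, a (m + 1) * (g z * cexp (2 * π * I * ((m : ℂ) + 1) * z)) :=
    funext fun z => by rw [← tsum_mul_left]; exact tsum_congr fun m => mul_left_comm _ _ _
  simp only [hseries, ← segInt_const_mul]
  refine hasSum_segInt (c := fun m => M * (‖a (m + 1)‖ * r ^ (m + 1))) (fun m => by fun_prop)
    ((ha r (Real.exp_pos _) hr1).mul_left M) fun m t ht => ?_
  rw [norm_mul, norm_mul, mul_left_comm]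
  gcongr
  · exact (norm_nonneg _).trans (hM t ht)
  · exact hM t ht
  · exact norm_exp_two_pi_I_mul_le (min_im_le_im_segment ht) m

theorem cexp_div_pow_eq_segInt_add_segInt_bernoulli (n m : ℕ) (τ τ₀ : ℂ) :
    cexp (2 * π * I * ((m : ℂ) + 1) * τ) / ((m : ℂ) + 1) ^ (n + 1)
      = (2 * π * I) ^ (n + 1) / n.factorial
          * segInt (fun z => (τ - z) ^ n * cexp (2 * π * I * ((m : ℂ) + 1) * z)) τ₀ τ
        + (2 * π * I) ^ (n + 1) / (n + 1).factorial
          * segInt (fun z => aeval (τ - z) (Polynomial.bernoulli (n + 1))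
              * cexp (2 * π * I * ((m : ℂ) + 1) * z)) τ₀ (τ₀ - 1) := by
  have hc : 2 * π * I ≠ 0 := by simp [Real.pi_ne_zero, I_ne_zero]
  have hw : 2 * π * I * ((m : ℂ) + 1) ≠ 0 := mul_ne_zero hc (Nat.cast_add_one_ne_zero m)
  have hw1 : cexp (2 * π * I * ((m : ℂ) + 1)) = 1 := by
    simpa [mul_comm, mul_assoc, mul_left_comm] using exp_nat_mul_two_pi_mul_I (m + 1)
  have key := segInt_pow_mul_exp_add_segInt_bernoulli_mul_exp hw hw1 n τ τ₀
  rw [mul_pow, ← div_div, div_right_comm, eq_div_iff (pow_ne_zero _ hc)] at key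
  rw [← key]
  ring

/-- For `f(τ) = Σ_{m≥1} a_m e^{2πimτ}` with
`Σ_{m≥1} |a_m| r^m < ∞` for all `0 < r < 1`, and
`f̃_∞(τ) = Σ_{m≥1} (a_m/m^{k−1}) e^{2πimτ}`, one has for all `τ₀, τ` in the upper half-plane
`f̃_∞(τ) − f̃_{τ₀}(τ) = ((2πi)^{k−1}/(k−1)!) ∫_{τ₀}^{τ₀−1} B_{k−1}(τ−z) f(z) dz`,
where `B_{k−1}` is the `(k−1)`-st Bernoulli polynomial. -/
theorem eichler_infty_sub_eichler_basepoint (k : ℕ) (hk : 2 ≤ k) (a : ℕ → ℂ)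
    (hsum : ∀ r : ℝ, 0 < r → r < 1 → Summable (fun m : ℕ => ‖a (m + 1)‖ * r ^ (m + 1)))
    (f fe : ℂ → ℂ)
    (hf : ∀ τ : ℂ, f τ =
      ∑' m : ℕ, a (m + 1) * Complex.exp (2 * (Real.pi : ℂ) * Complex.I * ((m : ℂ) + 1) * τ))
    (hfe : ∀ τ : ℂ, fe τ =
      ∑' m : ℕ, a (m + 1) / ((m : ℂ) + 1) ^ (k - 1) *
        Complex.exp (2 * (Real.pi : ℂ) * Complex.I * ((m : ℂ) + 1) * τ)) :
    ∀ τ₀ τ : ℂ, 0 < τ₀.im → 0 < τ.im →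
      fe τ - eichler k f τ₀ τ
        = (2 * (Real.pi : ℂ) * Complex.I) ^ (k - 1) / (Nat.factorial (k - 1) : ℂ) *
            segInt (fun z => Polynomial.aeval (τ - z) (Polynomial.bernoulli (k - 1)) * f z)
              τ₀ (τ₀ - 1) := by
  obtain ⟨n, rfl⟩ : ∃ n, k = n + 2 := ⟨k - 2, by omega⟩
  intro τ₀ τ h₀ hτ
  simp only [eichler, show n + 2 - 1 = n + 1 from rfl, Nat.add_sub_cancel] at hfe ⊢
  simp only [hf]
  have hS₁ := hasSum_segInt_mul_fourier (g := fun z => (τ - z) ^ n) (by fun_prop) hsum h₀ hτ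
  have hS₂ := hasSum_segInt_mul_fourier (g := fun z => aeval (τ - z) (Polynomial.bernoulli (n + 1)))
    (by fun_prop) hsum h₀ (z₁ := τ₀ - 1) (by simpa using h₀)
  have hmodes := (hS₁.mul_left ((2 * π * I) ^ (n + 1) / n.factorial)).add
    (hS₂.mul_left ((2 * π * I) ^ (n + 1) / (n + 1).factorial))
  rw [hfe τ, sub_eq_iff_eq_add', ← hmodes.tsum_eq]
  refine tsum_congr fun m => ?_
  rw [div_mul_eq_mul_div, mul_div_assoc, cexp_div_pow_eq_segInt_add_segInt_bernoulli n m τ τ₀]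
  ring
end

section
/- Let k ≥ 2 be an integer, let f : ℍ → ℂ be holomorphic, let g ∈ SL(2, ℝ), and set γ = g·T·g^{−1} where T = (1 1; 0 1). Assume f|_k γ = f and that (f|_k g)(τ) = Σ_{m≥1} a_m e^{2πimτ} for complex numbers (a_m)_{m≥1} with Σ_{m≥1} |a_m| r^m < ∞ for every 0 < r < 1. Then for every τ₀ ∈ ℍ there exists a polynomial p of degree at most k−2 with complex coefficients such that for all τ ∈ ℍ: (f̃_{τ₀} |_{2−k} γ)(τ) − f̃_{τ₀}(τ) = (p|_{2−k} γ)(τ) − p(τ). (That is, the period polynomial of f at the parabolic element γ is a coboundary, so the cocycle γ ↦ f̃_{τ₀}|_{2−k}(γ−1) is parabolic.) -/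
/-!
Pulling the Fourier expansion of `f|_k g` back by `g⁻¹` gives
`f(z) = (-cz + a)^{-k} Σ a_m e^{2πi m g⁻¹z}`. Substituting `w = g⁻¹z`, the `m`-th mode of the
Eichler integrand `(τ - z)^{k-2} f(z) dz` becomes `(-cτ + a)^{k-2} (g⁻¹τ - w)^{k-2} e^{2πi m w} dw`,
which has an elementary primitive; the series may be integrated termwise because `Im g⁻¹z` is
bounded below on the path of integration. So the Eichler integral is `Φ(τ) - P(τ)`, with `Φ`
collecting the primitives at `w = g⁻¹τ` and `P` those at `w = g⁻¹τ₀`. Since `g⁻¹γ = T g⁻¹`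
translates `w` by `1`, `Φ` is invariant under `|_{2-k} γ`; since `(-cτ + a)(g⁻¹τ - g⁻¹τ₀)` is
linear in `τ`, `P` is a polynomial of degree at most `k - 2`. Hence the period of `f̃_{τ₀}` at `γ`
is that of `-P`.
-/

open Complex

lemma add_ofReal_mul_sub_mem_segment {z₀ z₁ : ℂ} {t : ℝ} (ht : t ∈ Set.Icc (0:ℝ) 1) :
    z₀ + (t : ℂ) * (z₁ - z₀) ∈ segment ℝ z₀ z₁ := by
  rw [segment_eq_image']
  exact ⟨t, ht, by simp [Complex.real_smul]⟩

lemma isCompact_segment_complex (z₀ z₁ : ℂ) : IsCompact (segment ℝ z₀ z₁) := by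
  rw [segment_eq_image']
  exact isCompact_Icc.image (by fun_prop)

lemma segInt_congr {F G : ℂ → ℂ} {z₀ z₁ : ℂ} (h : ∀ z ∈ segment ℝ z₀ z₁, F z = G z) :
    segInt F z₀ z₁ = segInt G z₀ z₁ := by
  refine intervalIntegral.integral_congr fun t ht => ?_
  rw [Set.uIcc_of_le zero_le_one] at ht
  simp only [h _ (add_ofReal_mul_sub_mem_segment ht)]

lemma continuousOn_segInt_integrand {F : ℂ → ℂ} {z₀ z₁ : ℂ} (hF : ContinuousOn F (segment ℝ z₀ z₁))
    (s : Set ℝ) (hs : s ⊆ Set.Icc 0 1) :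
    ContinuousOn (fun t : ℝ => F (z₀ + (t : ℂ) * (z₁ - z₀)) * (z₁ - z₀)) s :=
  (hF.comp (by fun_prop) fun _ ht => add_ofReal_mul_sub_mem_segment (hs ht)).mul continuousOn_const

lemma segInt_eq_sub_of_hasDerivAt_s5 {F F' : ℂ → ℂ} {z₀ z₁ : ℂ}
    (hF : ∀ z ∈ segment ℝ z₀ z₁, HasDerivAt F (F' z) z)
    (hF' : ContinuousOn F' (segment ℝ z₀ z₁)) :
    segInt F' z₀ z₁ = F z₁ - F z₀ := by
  have hline (t : ℝ) : HasDerivAt (fun s : ℝ => z₀ + (s : ℂ) * (z₁ - z₀)) (z₁ - z₀) t := by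
    simpa using ((hasDerivAt_id (t : ℂ)).comp_ofReal.mul_const (z₁ - z₀)).const_add z₀
  unfold segInt
  rw [intervalIntegral.integral_eq_sub_of_hasDerivAt (f := fun t : ℝ => F (z₀ + t * (z₁ - z₀)))]
  · simp
  · intro t ht
    rw [Set.uIcc_of_le zero_le_one] at ht
    simpa [mul_comm, Function.comp_def] using
      (hF _ (add_ofReal_mul_sub_mem_segment ht)).scomp t (hline t)
  · refine ContinuousOn.intervalIntegrable ?_
    rw [Set.uIcc_of_le zero_le_one]
    exact continuousOn_segInt_integrand hF' _ subset_rfl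

lemma segInt_tsum_of_norm_le {F : ℕ → ℂ → ℂ} {z₀ z₁ : ℂ} {B : ℕ → ℝ} (hB : Summable B)
    (hF : ∀ m, ContinuousOn (F m) (segment ℝ z₀ z₁))
    (hFB : ∀ m, ∀ z ∈ segment ℝ z₀ z₁, ‖F m z‖ ≤ B m) :
    segInt (fun z => ∑' m, F m z) z₀ z₁ = ∑' m, segInt (F m) z₀ z₁ := by
  have hIoc : Set.uIoc (0:ℝ) 1 ⊆ Set.Icc 0 1 := by
    rw [Set.uIoc_of_le zero_le_one]; exact Set.Ioc_subset_Icc_self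
  have hmem {t : ℝ} (ht : t ∈ Set.uIoc (0:ℝ) 1) : z₀ + (t : ℂ) * (z₁ - z₀) ∈ segment ℝ z₀ z₁ :=
    add_ofReal_mul_sub_mem_segment (hIoc ht)
  refine ((intervalIntegral.hasSum_integral_of_dominated_convergence
    (fun m _ => B m * ‖z₁ - z₀‖) (fun m => ?_) (fun m => ?_) ?_ ?_ ?_).tsum_eq).symm
  · exact (continuousOn_segInt_integrand (hF m) _ hIoc).aestronglyMeasurable measurableSet_uIoc
  · refine Filter.Eventually.of_forall fun t ht => ?_
    rw [norm_mul]
    exact mul_le_mul_of_nonneg_right (hFB m _ (hmem ht)) (norm_nonneg _)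
  · exact Filter.Eventually.of_forall fun _ _ => hB.mul_right _
  · exact intervalIntegrable_const
  · refine Filter.Eventually.of_forall fun t ht => ?_
    exact (Summable.of_norm_bounded hB fun m => hFB m _ (hmem ht)).hasSum.mul_right _

section FourierSeries

noncomputable def freq (m : ℕ) : ℂ := 2 * (Real.pi : ℂ) * Complex.I * ((m : ℂ) + 1)

lemma norm_freq (m : ℕ) : ‖freq m‖ = 2 * Real.pi * ((m : ℝ) + 1) := by
  have : freq m = ((2 * Real.pi * ((m : ℝ) + 1) : ℝ) : ℂ) * Complex.I := by
    unfold freq; push_cast; ring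
  rw [this, norm_mul, Complex.norm_I, mul_one, Complex.norm_real,
    Real.norm_of_nonneg (by positivity)]

lemma norm_div_freq_pow_le (x : ℂ) (m i : ℕ) : ‖x / freq m ^ i‖ ≤ ‖x‖ := by
  rw [norm_div, norm_pow]
  refine div_le_self (norm_nonneg x) (one_le_pow₀ ?_)
  rw [norm_freq]
  nlinarith [Real.pi_gt_three, (Nat.cast_nonneg m : (0:ℝ) ≤ m)]

lemma exp_freq_mul_add_one (m : ℕ) (w : ℂ) :
    Complex.exp (freq m * (w + 1)) = Complex.exp (freq m * w) := by
  have h : freq m = (((m + 1 : ℕ) : ℤ) : ℂ) * (2 * Real.pi * Complex.I) := by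
    unfold freq; push_cast; ring
  rw [mul_add, Complex.exp_add, mul_one, h, Complex.exp_int_mul_two_pi_mul_I, mul_one]

lemma norm_exp_freq_mul (m : ℕ) (w : ℂ) :
    ‖Complex.exp (freq m * w)‖ = Real.exp (-(2 * Real.pi * w.im)) ^ (m + 1) := by
  rw [Complex.norm_exp, ← Real.exp_nat_mul]
  congr 1
  simp [freq, Complex.mul_re, Complex.mul_im]
  ring

variable {am : ℕ → ℂ}

lemma exists_summable_bound_fourier
    (hsum : ∀ r : ℝ, 0 < r → r < 1 → Summable (fun m : ℕ => ‖am (m + 1)‖ * r ^ (m + 1)))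
    {K : Set ℂ} (hK : IsCompact K) {w : ℂ → ℂ} (hw : ContinuousOn w K)
    (hw_im : ∀ z ∈ K, 0 < (w z).im) {g : ℕ → ℂ → ℂ} {C : ℝ} (hg : ∀ m, ∀ z ∈ K, ‖g m z‖ ≤ C) :
    ∃ B : ℕ → ℝ, Summable B ∧
      ∀ m, ∀ z ∈ K, ‖g m z * (am (m + 1) * Complex.exp (freq m * w z))‖ ≤ B m := by
  rcases K.eq_empty_or_nonempty with rfl | hne
  · exact ⟨0, summable_zero, by simp⟩
  obtain ⟨z₁, hz₁, hmin⟩ := hK.exists_isMinOn hne (Complex.continuous_im.comp_continuousOn hw)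
  set r := Real.exp (-(2 * Real.pi * (w z₁).im))
  have hr1 : r < 1 := by
    rw [Real.exp_lt_one_iff]
    nlinarith [Real.pi_pos, hw_im z₁ hz₁]
  refine ⟨fun m => C * (‖am (m + 1)‖ * r ^ (m + 1)),
    (hsum r (Real.exp_pos _) hr1).mul_left C, fun m z hz => ?_⟩
  have hexp : Real.exp (-(2 * Real.pi * (w z).im)) ^ (m + 1) ≤ r ^ (m + 1) := by
    refine pow_le_pow_left₀ (Real.exp_pos _).le (Real.exp_le_exp.2 ?_) _
    have h := isMinOn_iff.mp hmin z hz
    simp only [Function.comp_apply] at h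
    nlinarith [Real.pi_pos]
  rw [norm_mul, norm_mul, norm_exp_freq_mul]
  exact mul_le_mul (hg m z hz) (by gcongr) (by positivity) ((norm_nonneg _).trans (hg m z hz))

lemma summable_fourier_mul
    (hsum : ∀ r : ℝ, 0 < r → r < 1 → Summable (fun m : ℕ => ‖am (m + 1)‖ * r ^ (m + 1)))
    {g : ℕ → ℂ} {C : ℝ} (hg : ∀ m, ‖g m‖ ≤ C) {w : ℂ} (hw : 0 < w.im) :
    Summable (fun m => g m * (am (m + 1) * Complex.exp (freq m * w))) := by
  obtain ⟨B, hB, hbound⟩ := exists_summable_bound_fourier hsum (K := {w}) isCompact_singleton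
    continuousOn_id (by simpa using hw) (g := fun m _ => g m) (fun m _ _ => hg m)
  exact Summable.of_norm_bounded hB fun m => hbound m w rfl

end FourierSeries

section Moebius

variable {a b c d : ℝ}

noncomputable def moebiusDenom (c d : ℝ) (z : ℂ) : ℂ := (c : ℂ) * z + (d : ℂ)

noncomputable def moebius (a b c d : ℝ) (z : ℂ) : ℂ :=
  ((a : ℂ) * z + (b : ℂ)) / ((c : ℂ) * z + (d : ℂ))

lemma moebius_eq_div (z : ℂ) : moebius a b c d z = ((a : ℂ) * z + b) / moebiusDenom c d z := rfl

lemma slash_apply (w : ℤ) (F : ℂ → ℂ) (z : ℂ) :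
    slash w a b c d F z = moebiusDenom c d z ^ (-w) * F (moebius a b c d z) := rfl

lemma moebiusDenom_ne_zero (hdet : a * d - b * c = 1) {z : ℂ} (hz : 0 < z.im) :
    moebiusDenom c d z ≠ 0 := by
  intro h
  have him : c * z.im = 0 := by simpa [moebiusDenom] using congrArg Complex.im h
  have hre : c * z.re + d = 0 := by simpa [moebiusDenom] using congrArg Complex.re h
  have hc : c = 0 := (mul_eq_zero.mp him).resolve_right hz.ne'
  rw [hc] at hre hdet
  rw [zero_mul, zero_add] at hre
  rw [hre] at hdet
  simp at hdet

lemma im_moebius_s5 (hdet : a * d - b * c = 1) (z : ℂ) :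
    (moebius a b c d z).im = z.im / Complex.normSq (moebiusDenom c d z) := by
  have hnum : ((a:ℂ)*z+b).im * ((c:ℂ)*z+d).re - ((a:ℂ)*z+b).re * ((c:ℂ)*z+d).im = z.im := by
    simp only [Complex.add_im, Complex.add_re, Complex.mul_im, Complex.mul_re, Complex.ofReal_re,
      Complex.ofReal_im]
    linear_combination z.im * hdet
  rw [moebius, Complex.div_im, div_sub_div_same, hnum, moebiusDenom]

lemma im_moebius_pos_s5 (hdet : a * d - b * c = 1) {z : ℂ} (hz : 0 < z.im) :
    0 < (moebius a b c d z).im := by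
  rw [im_moebius_s5 hdet]
  exact div_pos hz (Complex.normSq_pos.2 (moebiusDenom_ne_zero hdet hz))

end Moebius

lemma det_parabolic (a c : ℝ) : (1 - a * c) * (1 + a * c) - a ^ 2 * -c ^ 2 = 1 := by ring

/- `moebius d (-b) (-c) a` is the action of `g⁻¹`, and
`moebius (1 - a * c) (a ^ 2) (-c ^ 2) (1 + a * c)` that of `γ = g T g⁻¹`. -/
section InverseMoebius

variable {a b c d : ℝ} (hdet : a * d - b * c = 1)
include hdet

lemma det_inverse : d * a - -b * -c = 1 := by linear_combination hdet

omit hdet in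
lemma moebius_inverse_eq (z : ℂ) :
    moebius d (-b) (-c) a z = ((d : ℂ) * z - b) / moebiusDenom (-c) a z := by
  simp [moebius_eq_div, sub_eq_add_neg]

lemma moebiusDenom_moebius_inverse {z : ℂ} (hz : 0 < z.im) :
    moebiusDenom c d (moebius d (-b) (-c) a z) = (moebiusDenom (-c) a z)⁻¹ := by
  have hdetC : (a : ℂ) * d - b * c = 1 := by exact_mod_cast hdet
  have h := moebiusDenom_ne_zero (det_inverse hdet) hz
  rw [moebius_inverse_eq]
  generalize hu : moebiusDenom (-c) a z = u at h ⊢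
  unfold moebiusDenom
  field_simp
  rw [← hu, moebiusDenom]
  push_cast
  linear_combination hdetC

lemma moebius_moebius_inverse {z : ℂ} (hz : 0 < z.im) :
    moebius a b c d (moebius d (-b) (-c) a z) = z := by
  have hdetC : (a : ℂ) * d - b * c = 1 := by exact_mod_cast hdet
  have h := moebiusDenom_ne_zero (det_inverse hdet) hz
  rw [moebius_eq_div, moebiusDenom_moebius_inverse hdet hz, moebius_inverse_eq]
  generalize hu : moebiusDenom (-c) a z = u at h ⊢
  field_simp
  rw [← hu, moebiusDenom]
  push_cast
  linear_combination z * hdetC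

lemma moebius_inverse_sub_mul {τ z : ℂ} (hτ : 0 < τ.im) (hz : 0 < z.im) :
    (moebius d (-b) (-c) a τ - moebius d (-b) (-c) a z) *
      (moebiusDenom (-c) a τ * moebiusDenom (-c) a z) = τ - z := by
  have hdetC : (a : ℂ) * d - b * c = 1 := by exact_mod_cast hdet
  have h₁ := moebiusDenom_ne_zero (det_inverse hdet) hτ
  have h₂ := moebiusDenom_ne_zero (det_inverse hdet) hz
  rw [moebius_inverse_eq, moebius_inverse_eq]
  generalize hu : moebiusDenom (-c) a τ = u at h₁ ⊢
  generalize hv : moebiusDenom (-c) a z = v at h₂ ⊢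
  field_simp
  rw [← hu, ← hv, moebiusDenom, moebiusDenom]
  push_cast
  linear_combination (τ - z) * hdetC

lemma moebiusDenom_mul_moebius_inverse_sub (w : ℂ) {τ : ℂ} (hτ : 0 < τ.im) :
    moebiusDenom (-c) a τ * (moebius d (-b) (-c) a τ - w) = (d + w * c) * τ - (b + w * a) := by
  have h := moebiusDenom_ne_zero (det_inverse hdet) hτ
  rw [moebius_inverse_eq]
  generalize hu : moebiusDenom (-c) a τ = u at h ⊢
  field_simp
  rw [← hu, moebiusDenom]
  push_cast
  ring

lemma hasDerivAt_moebius_inverse {z : ℂ} (hz : 0 < z.im) :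
    HasDerivAt (moebius d (-b) (-c) a) (moebiusDenom (-c) a z ^ 2)⁻¹ z := by
  have hdetC : (a : ℂ) * d - b * c = 1 := by exact_mod_cast hdet
  have h := moebiusDenom_ne_zero (det_inverse hdet) hz
  have hnum := ((hasDerivAt_id z).const_mul (d : ℂ)).add_const ((-b : ℝ) : ℂ)
  have hden := ((hasDerivAt_id z).const_mul ((-c : ℝ) : ℂ)).add_const (a : ℂ)
  refine (hnum.div hden h).congr_deriv ?_
  rw [inv_eq_one_div]
  congr 1
  push_cast
  linear_combination hdetC

omit hdet in
lemma moebiusDenom_moebius_parabolic {τ : ℂ} (hτ : 0 < τ.im) :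
    moebiusDenom (-c) a (moebius (1 - a * c) (a ^ 2) (-c ^ 2) (1 + a * c) τ) *
      moebiusDenom (-c ^ 2) (1 + a * c) τ = moebiusDenom (-c) a τ := by
  have h := moebiusDenom_ne_zero (det_parabolic a c) hτ
  rw [moebius_eq_div]
  generalize hj : moebiusDenom (-c ^ 2) (1 + a * c) τ = j at h ⊢
  unfold moebiusDenom
  field_simp
  rw [← hj, moebiusDenom]
  push_cast
  ring

lemma moebius_inverse_moebius_parabolic {τ : ℂ} (hτ : 0 < τ.im) :
    moebius d (-b) (-c) a (moebius (1 - a * c) (a ^ 2) (-c ^ 2) (1 + a * c) τ) =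
      moebius d (-b) (-c) a τ + 1 := by
  have hdetC : (a : ℂ) * d - b * c = 1 := by exact_mod_cast hdet
  have hj := moebiusDenom_ne_zero (det_parabolic a c) hτ
  have hu := moebiusDenom_ne_zero (det_inverse hdet) hτ
  rw [moebius_inverse_eq, moebius_inverse_eq,
    eq_div_of_mul_eq hj (moebiusDenom_moebius_parabolic hτ), moebius_eq_div]
  generalize hj' : moebiusDenom (-c ^ 2) (1 + a * c) τ = j at hj ⊢
  generalize hu' : moebiusDenom (-c) a τ = u at hu ⊢
  field_simp
  rw [← hj', ← hu', moebiusDenom, moebiusDenom]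
  push_cast
  linear_combination ((a : ℂ) - c * τ) * hdetC

end InverseMoebius

section ExpPrimitive

/-- Integration by parts gives this primitive of `w ↦ (w' - w) ^ l * exp (μ w)`. -/
noncomputable def expPrimitive (μ w' : ℂ) : ℕ → ℂ → ℂ
  | 0 => fun w => Complex.exp (μ * w) / μ
  | l + 1 => fun w =>
      Complex.exp (μ * w) * (w' - w) ^ (l + 1) / μ + ((l : ℂ) + 1) / μ * expPrimitive μ w' l w

variable {μ : ℂ}

lemma hasDerivAt_expPrimitive (w' : ℂ) (hμ : μ ≠ 0) (l : ℕ) (w : ℂ) :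
    HasDerivAt (expPrimitive μ w' l) ((w' - w) ^ l * Complex.exp (μ * w)) w := by
  have hexp (w : ℂ) :
      HasDerivAt (fun w : ℂ => Complex.exp (μ * w)) (Complex.exp (μ * w) * μ) w := by
    simpa using ((hasDerivAt_id w).const_mul μ).cexp
  induction l generalizing w with
  | zero =>
    refine ((hexp w).div_const μ).congr_deriv ?_
    field_simp
  | succ l ih =>
    have hpow : HasDerivAt (fun w : ℂ => (w' - w) ^ (l + 1))
        (((l : ℂ) + 1) * (w' - w) ^ l * (-1)) w := by
      simpa using ((hasDerivAt_id w).const_sub w').fun_pow (l + 1)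
    refine (((hexp w).mul hpow).div_const μ |>.add
      ((ih w).const_mul (((l : ℂ) + 1) / μ))).congr_deriv ?_
    field_simp
    ring

lemma expPrimitive_self (w' : ℂ) (l : ℕ) :
    expPrimitive μ w' l w' = l.factorial / μ ^ (l + 1) * Complex.exp (μ * w') := by
  induction l with
  | zero => simp [expPrimitive]; ring
  | succ l ih =>
    simp only [expPrimitive, sub_self, ih, Nat.factorial_succ]
    push_cast
    field_simp
    ring

lemma expPrimitive_eq_sum (w' : ℂ) (l : ℕ) (w : ℂ) :
    expPrimitive μ w' l w = ∑ j ∈ Finset.range (l + 1),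
      (l.factorial / (l - j).factorial : ℂ) / μ ^ (j + 1) * (w' - w) ^ (l - j) *
        Complex.exp (μ * w) := by
  induction l with
  | zero => simp [expPrimitive]; ring
  | succ l ih =>
    simp only [expPrimitive]
    rw [Finset.sum_range_succ', ih, Finset.mul_sum, add_comm]
    congr 1
    · refine Finset.sum_congr rfl fun j _ => ?_
      rw [Nat.succ_sub_succ, Nat.factorial_succ]
      push_cast
      ring
    · simp [Nat.factorial_ne_zero]
      ring

end ExpPrimitive

section EichlerIntegral

variable {a b c d : ℝ} (hdet : a * d - b * c = 1) {am : ℕ → ℂ}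

noncomputable def modePrimitive (a b c d : ℝ) (l m : ℕ) (τ z : ℂ) : ℂ :=
  moebiusDenom (-c) a τ ^ l *
    expPrimitive (freq m) (moebius d (-b) (-c) a τ) l (moebius d (-b) (-c) a z)

noncomputable def primitiveCoeff (l j m : ℕ) : ℂ :=
  (l.factorial / (l - j).factorial : ℂ) / freq m ^ (j + 1)

noncomputable def eichlerConst (l : ℕ) : ℂ :=
  (2 * (Real.pi : ℂ) * Complex.I) ^ (l + 1) / l.factorial

include hdet

lemma eq_tsum_of_slash_eq_fourier {k : ℕ} {f : ℂ → ℂ}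
    (hfourier : ∀ τ : ℂ, 0 < τ.im →
      slash (k : ℤ) a b c d f τ =
        ∑' m : ℕ, am (m + 1) * Complex.exp (2 * (Real.pi : ℂ) * Complex.I * ((m : ℂ) + 1) * τ))
    {z : ℂ} (hz : 0 < z.im) :
    f z = (moebiusDenom (-c) a z ^ k)⁻¹ *
      ∑' m : ℕ, am (m + 1) * Complex.exp (freq m * moebius d (-b) (-c) a z) := by
  have h := hfourier _ (im_moebius_pos_s5 (det_inverse hdet) hz)
  rw [slash_apply, moebiusDenom_moebius_inverse hdet hz, moebius_moebius_inverse hdet hz,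
    inv_zpow', neg_neg, zpow_natCast] at h
  rw [eq_inv_mul_iff_mul_eq₀ (pow_ne_zero k (moebiusDenom_ne_zero (det_inverse hdet) hz)), h]
  rfl

lemma hasDerivAt_modePrimitive (l m : ℕ) {τ z : ℂ} (hτ : 0 < τ.im) (hz : 0 < z.im) :
    HasDerivAt (modePrimitive a b c d l m τ)
      ((τ - z) ^ l * (moebiusDenom (-c) a z ^ (l + 2))⁻¹ *
        Complex.exp (freq m * moebius d (-b) (-c) a z)) z := by
  have hfreq : freq m ≠ 0 := by
    rw [← norm_ne_zero_iff, norm_freq]; positivity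
  have hu := moebiusDenom_ne_zero (det_inverse hdet) hz
  refine (((hasDerivAt_expPrimitive _ hfreq l _).comp z
    (hasDerivAt_moebius_inverse hdet hz)).const_mul _).congr_deriv ?_
  rw [← moebius_inverse_sub_mul hdet hτ hz, mul_pow, mul_pow]
  field_simp
  ring

lemma eichler_eq_tsum
    (hsum : ∀ r : ℝ, 0 < r → r < 1 → Summable (fun m : ℕ => ‖am (m + 1)‖ * r ^ (m + 1)))
    {l : ℕ} {f : ℂ → ℂ}
    (hfourier : ∀ τ : ℂ, 0 < τ.im →
      slash ((l + 2 : ℕ) : ℤ) a b c d f τ =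
        ∑' m : ℕ, am (m + 1) * Complex.exp (2 * (Real.pi : ℂ) * Complex.I * ((m : ℂ) + 1) * τ))
    {τ₀ τ : ℂ} (hτ₀ : 0 < τ₀.im) (hτ : 0 < τ.im) :
    eichler (l + 2) f τ₀ τ = eichlerConst l *
      ∑' m, am (m + 1) * (modePrimitive a b c d l m τ τ - modePrimitive a b c d l m τ τ₀) := by
  have hseg : segment ℝ τ₀ τ ⊆ {z | 0 < z.im} :=
    (convex_halfSpace_im_gt 0).segment_subset hτ₀ hτ
  set φ : ℂ → ℂ := fun z => (τ - z) ^ l * (moebiusDenom (-c) a z ^ (l + 2))⁻¹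
  set w : ℂ → ℂ := moebius d (-b) (-c) a
  have hφ : ContinuousOn φ (segment ℝ τ₀ τ) :=
    (Continuous.continuousOn (by fun_prop)).mul <|
      (Continuous.continuousOn (by unfold moebiusDenom; fun_prop)).inv₀ fun z hz =>
        pow_ne_zero _ (moebiusDenom_ne_zero (det_inverse hdet) (hseg hz))
  have hw : ContinuousOn w (segment ℝ τ₀ τ) := fun z hz =>
    (hasDerivAt_moebius_inverse hdet (hseg hz)).continuousAt.continuousWithinAt
  have hmode_cont (m : ℕ) :
      ContinuousOn (fun z => φ z * (am (m + 1) * Complex.exp (freq m * w z))) (segment ℝ τ₀ τ) :=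
    hφ.mul (continuousOn_const.mul (Complex.continuous_exp.comp_continuousOn
      (continuousOn_const.mul hw)))
  have hmode (m : ℕ) : segInt (fun z => φ z * (am (m + 1) * Complex.exp (freq m * w z))) τ₀ τ =
      am (m + 1) * (modePrimitive a b c d l m τ τ - modePrimitive a b c d l m τ τ₀) := by
    rw [mul_sub]
    refine segInt_eq_sub_of_hasDerivAt_s5 (F := fun z => am (m + 1) * modePrimitive a b c d l m τ z)
      (fun z hz => ?_) (hmode_cont m)
    exact ((hasDerivAt_modePrimitive hdet l m hτ (hseg hz)).const_mul (am (m + 1))).congr_deriv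
      (by ring)
  obtain ⟨C, hC⟩ := (isCompact_segment_complex τ₀ τ).exists_bound_of_continuousOn hφ
  obtain ⟨B, hB, hbound⟩ := exists_summable_bound_fourier hsum (isCompact_segment_complex τ₀ τ)
    hw (fun z hz => im_moebius_pos_s5 (det_inverse hdet) (hseg hz)) (g := fun _ => φ) (fun _ => hC)
  unfold eichler eichlerConst
  rw [show l + 2 - 1 = l + 1 by omega, Nat.add_sub_cancel, ← tsum_congr hmode,
    ← segInt_tsum_of_norm_le hB hmode_cont hbound]
  congr 1
  refine segInt_congr fun z hz => ?_
  rw [eq_tsum_of_slash_eq_fourier hdet hfourier (hseg hz), ← tsum_mul_left, ← tsum_mul_left]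
  exact tsum_congr fun m => by ring

lemma modePrimitive_eq_sum (l m : ℕ) {τ z w : ℂ} (hτ : 0 < τ.im)
    (hw : moebius d (-b) (-c) a z = w) :
    modePrimitive a b c d l m τ z = ∑ j ∈ Finset.range (l + 1),
      primitiveCoeff l j m * Complex.exp (freq m * w) *
        ((((d : ℂ) + w * c) * τ - (b + w * a)) ^ (l - j) * moebiusDenom (-c) a τ ^ j) := by
  rw [modePrimitive, hw, expPrimitive_eq_sum, Finset.mul_sum]
  refine Finset.sum_congr rfl fun j hj => ?_
  have hsplit :
      moebiusDenom (-c) a τ ^ l = moebiusDenom (-c) a τ ^ (l - j) * moebiusDenom (-c) a τ ^ j := by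
    rw [← pow_add, Nat.sub_add_cancel (Nat.lt_succ_iff.mp (Finset.mem_range.mp hj))]
  rw [hsplit, ← moebiusDenom_mul_moebius_inverse_sub hdet _ hτ, mul_pow, primitiveCoeff]
  ring

lemma hasSum_mul_modePrimitive
    (hsum : ∀ r : ℝ, 0 < r → r < 1 → Summable (fun m : ℕ => ‖am (m + 1)‖ * r ^ (m + 1)))
    (l : ℕ) {τ z w : ℂ} (hτ : 0 < τ.im) (hz : 0 < z.im) (hw : moebius d (-b) (-c) a z = w) :
    HasSum (fun m => am (m + 1) * modePrimitive a b c d l m τ z) (∑ j ∈ Finset.range (l + 1),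
      (∑' m, primitiveCoeff l j m * (am (m + 1) * Complex.exp (freq m * w))) *
        ((((d : ℂ) + w * c) * τ - (b + w * a)) ^ (l - j) * moebiusDenom (-c) a τ ^ j)) := by
  have hw_im : 0 < w.im := hw ▸ im_moebius_pos_s5 (det_inverse hdet) hz
  have hmode (j : ℕ) (_ : j ∈ Finset.range (l + 1)) := ((summable_fourier_mul hsum
    (fun m => norm_div_freq_pow_le (l.factorial / (l - j).factorial : ℂ) m (j + 1))
      hw_im).hasSum.mul_right
        ((((d : ℂ) + w * c) * τ - (b + w * a)) ^ (l - j) * moebiusDenom (-c) a τ ^ j))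
  refine (hasSum_sum hmode).congr_fun fun m => ?_
  rw [modePrimitive_eq_sum hdet l m hτ hw, Finset.mul_sum]
  exact Finset.sum_congr rfl fun j _ => by rw [primitiveCoeff]; ring

lemma modePrimitive_self_parabolic (l m : ℕ) {τ : ℂ} (hτ : 0 < τ.im) :
    moebiusDenom (-c ^ 2) (1 + a * c) τ ^ l *
      modePrimitive a b c d l m (moebius (1 - a * c) (a ^ 2) (-c ^ 2) (1 + a * c) τ)
        (moebius (1 - a * c) (a ^ 2) (-c ^ 2) (1 + a * c) τ) =
      modePrimitive a b c d l m τ τ := by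
  simp only [modePrimitive, expPrimitive_self, moebius_inverse_moebius_parabolic hdet hτ,
    exp_freq_mul_add_one, ← moebiusDenom_moebius_parabolic hτ (c := c)]
  ring

noncomputable def periodicPart (a b c d : ℝ) (am : ℕ → ℂ) (l : ℕ) (σ : ℂ) : ℂ :=
  eichlerConst l * ∑' m, am (m + 1) * modePrimitive a b c d l m σ σ

lemma periodicPart_parabolic (am : ℕ → ℂ) (l : ℕ) {τ : ℂ} (hτ : 0 < τ.im) :
    moebiusDenom (-c ^ 2) (1 + a * c) τ ^ l *
      periodicPart a b c d am l (moebius (1 - a * c) (a ^ 2) (-c ^ 2) (1 + a * c) τ) =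
      periodicPart a b c d am l τ := by
  rw [periodicPart, periodicPart, mul_left_comm, ← tsum_mul_left]
  congr 1
  exact tsum_congr fun m => by rw [← modePrimitive_self_parabolic hdet l m hτ]; ring

end EichlerIntegral

open Polynomial

lemma natDegree_sum_C_mul_pow_mul_pow_le {R : Type*} [CommSemiring R] {p q : R[X]}
    (hp : p.natDegree ≤ 1) (hq : q.natDegree ≤ 1) (K : ℕ → R) (l : ℕ) :
    (∑ j ∈ Finset.range (l + 1), C (K j) * p ^ (l - j) * q ^ j).natDegree ≤ l := by
  refine natDegree_sum_le_of_forall_le _ _ fun j hj => ?_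
  have hj : j ≤ l := Nat.lt_succ_iff.mp (Finset.mem_range.mp hj)
  refine (natDegree_mul_le_of_le ((natDegree_C_mul_le _ _).trans (natDegree_pow_le_of_le _ hp))
    (natDegree_pow_le_of_le j hq)).trans ?_
  omega

noncomputable def boundaryPoly (a b c d : ℝ) (am : ℕ → ℂ) (l : ℕ) (τ₀ : ℂ) : ℂ[X] :=
  let w₀ := moebius d (-b) (-c) a τ₀
  ∑ j ∈ Finset.range (l + 1),
    C (eichlerConst l * ∑' m, primitiveCoeff l j m * (am (m + 1) * Complex.exp (freq m * w₀))) *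
      (C ((d : ℂ) + w₀ * c) * X + C (-((b : ℂ) + w₀ * a))) ^ (l - j) *
        (C (-(c : ℂ)) * X + C (a : ℂ)) ^ j

lemma natDegree_boundaryPoly_le (a b c d : ℝ) (am : ℕ → ℂ) (l : ℕ) (τ₀ : ℂ) :
    (boundaryPoly a b c d am l τ₀).natDegree ≤ l :=
  natDegree_sum_C_mul_pow_mul_pow_le natDegree_linear_le natDegree_linear_le _ l

lemma eichler_eq_periodicPart_sub_boundaryPoly {a b c d : ℝ} (hdet : a * d - b * c = 1)
    {am : ℕ → ℂ}
    (hsum : ∀ r : ℝ, 0 < r → r < 1 → Summable (fun m : ℕ => ‖am (m + 1)‖ * r ^ (m + 1)))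
    {l : ℕ} {f : ℂ → ℂ}
    (hfourier : ∀ τ : ℂ, 0 < τ.im →
      slash ((l + 2 : ℕ) : ℤ) a b c d f τ =
        ∑' m : ℕ, am (m + 1) * Complex.exp (2 * (Real.pi : ℂ) * Complex.I * ((m : ℂ) + 1) * τ))
    {τ₀ σ : ℂ} (hτ₀ : 0 < τ₀.im) (hσ : 0 < σ.im) :
    eichler (l + 2) f τ₀ σ =
      periodicPart a b c d am l σ - (boundaryPoly a b c d am l τ₀).eval σ := by
  have hself := hasSum_mul_modePrimitive hdet hsum l hσ hσ rfl
  have hbase := hasSum_mul_modePrimitive hdet hsum l hσ hτ₀ rfl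
  rw [eichler_eq_tsum hdet hsum hfourier hτ₀ hσ, tsum_congr fun m => mul_sub _ _ _,
    hself.summable.tsum_sub hbase.summable, hbase.tsum_eq, mul_sub, periodicPart, boundaryPoly]
  simp only [eval_finsetSum, eval_mul, eval_pow, eval_add, eval_C, eval_X, Finset.mul_sum]
  refine congrArg _ (Finset.sum_congr rfl fun j _ => ?_)
  rw [moebiusDenom]
  push_cast
  ring

theorem period_polynomial_parabolic_general (k : ℕ) (hk : 2 ≤ k)
    (f : ℂ → ℂ)
    (a b c d : ℝ) (hdet : a * d - b * c = 1)
    (am : ℕ → ℂ)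
    (hsum : ∀ r : ℝ, 0 < r → r < 1 → Summable (fun m : ℕ => ‖am (m + 1)‖ * r ^ (m + 1)))
    (hfourier : ∀ τ : ℂ, 0 < τ.im →
      slash (k : ℤ) a b c d f τ =
        ∑' m : ℕ, am (m + 1) * Complex.exp (2 * (Real.pi : ℂ) * Complex.I * ((m : ℂ) + 1) * τ)) :
    ∀ τ₀ : ℂ, 0 < τ₀.im →
      ∃ p : Polynomial ℂ, p.natDegree ≤ k - 2 ∧
        ∀ τ : ℂ, 0 < τ.im →
          slash (2 - (k : ℤ)) (1 - a * c) (a ^ 2) (-c ^ 2) (1 + a * c) (eichler k f τ₀) τ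
              - eichler k f τ₀ τ
            = slash (2 - (k : ℤ)) (1 - a * c) (a ^ 2) (-c ^ 2) (1 + a * c)
                (fun σ => p.eval σ) τ - p.eval τ := by
  intro τ₀ hτ₀
  obtain ⟨l, rfl⟩ : ∃ l, k = l + 2 := ⟨k - 2, by omega⟩
  refine ⟨-boundaryPoly a b c d am l τ₀,
    (natDegree_neg _).trans_le (natDegree_boundaryPoly_le a b c d am l τ₀), fun τ hτ => ?_⟩
  have hγτ := im_moebius_pos_s5 (det_parabolic a c) hτ
  have hE {σ : ℂ} (hσ : 0 < σ.im) :=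
    eichler_eq_periodicPart_sub_boundaryPoly hdet hsum hfourier hτ₀ hσ
  simp only [slash_apply, eval_neg]
  rw [hE hτ, hE hγτ, show -(2 - ((l + 2 : ℕ) : ℤ)) = l by push_cast; ring, zpow_natCast]
  linear_combination periodicPart_parabolic hdet am l hτ

/-- Let `γ = g·T·g⁻¹ = (1−ac, a²; −c², 1+ac)` be a parabolic element, with
`g = (a b; c d) ∈ SL(2, ℝ)` and `T = (1 1; 0 1)`.  If `f` is holomorphic on the upper
half-plane, invariant of weight `k` under `γ`, and `f|_k g` has a Fourier expansion
`Σ_{m≥1} a_m e^{2πimτ}` with `Σ_{m≥1} |a_m| r^m < ∞` for all `0 < r < 1`, then for every `τ₀`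
in the upper half-plane the period polynomial `f̃_{τ₀}|_{2−k}(γ−1)` is a coboundary:
there is a polynomial `p` of degree at most `k−2` with
`(f̃_{τ₀}|_{2−k}γ)(τ) − f̃_{τ₀}(τ) = (p|_{2−k}γ)(τ) − p(τ)` on the upper half-plane. -/
theorem period_polynomial_parabolic (k : ℕ) (hk : 2 ≤ k)
    (f : ℂ → ℂ) (hf : DifferentiableOn ℂ f {τ : ℂ | 0 < τ.im})
    (a b c d : ℝ) (hdet : a * d - b * c = 1)
    (hinv : ∀ τ : ℂ, 0 < τ.im →
      slash (k : ℤ) (1 - a * c) (a ^ 2) (-c ^ 2) (1 + a * c) f τ = f τ)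
    (am : ℕ → ℂ)
    (hsum : ∀ r : ℝ, 0 < r → r < 1 → Summable (fun m : ℕ => ‖am (m + 1)‖ * r ^ (m + 1)))
    (hfourier : ∀ τ : ℂ, 0 < τ.im →
      slash (k : ℤ) a b c d f τ =
        ∑' m : ℕ, am (m + 1) * Complex.exp (2 * (Real.pi : ℂ) * Complex.I * ((m : ℂ) + 1) * τ)) :
    ∀ τ₀ : ℂ, 0 < τ₀.im →
      ∃ p : Polynomial ℂ, p.natDegree ≤ k - 2 ∧
        ∀ τ : ℂ, 0 < τ.im →
          slash (2 - (k : ℤ)) (1 - a * c) (a ^ 2) (-c ^ 2) (1 + a * c) (eichler k f τ₀) τ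
              - eichler k f τ₀ τ
            = slash (2 - (k : ℤ)) (1 - a * c) (a ^ 2) (-c ^ 2) (1 + a * c)
                (fun σ => p.eval σ) τ - p.eval τ :=
  period_polynomial_parabolic_general k hk f a b c d hdet am hsum hfourier
end

section
/- (Independence of the Hecke action on cohomology from the choice of coset representatives.) Let Γ be a subgroup of SL(2, ℝ), let w be an integer, and let r : Γ → (ℍ → ℂ) satisfy the cocycle condition r(γδ) = r(γ)|_w δ + r(δ) for all γ, δ ∈ Γ. Let s ∈ ℕ, let M₁, …, M_s be real 2×2 matrices with positive determinant, and let γ′₁, …, γ′_s ∈ Γ; set M′_i = γ′_i·M_i. Fix γ ∈ Γ, elements γ₁, …, γ_s ∈ Γ, and a permutation π of {1, …, s} such that M_i·γ = γ_i·M_{π(i)} for all i, and set δ_i = γ′_i·γ_i·(γ′_{π(i)})^{−1} (so that M′_i·γ = δ_i·M′_{π(i)}). Then Σ_{i=1}^{s} r(δ_i)|_w M′_{π(i)} − Σ_{i=1}^{s} r(γ_i)|_w M_{π(i)} = P|_w γ − P, where P = Σ_{i=1}^{s} r(γ′_i)|_w M_i. (Hence the two Hecke actions on the cocycle r, defined via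 the two choices of representatives M_i and M′_i, differ by a coboundary.) -/
open Complex

lemma det_pos_denom {g : Matrix (Fin 2) (Fin 2) ℝ} (hg : 0 < g.det) {τ : ℂ} (hτ : 0 < τ.im) :
    ((g 1 0 : ℂ) * τ + (g 1 1 : ℂ)) ≠ 0 := by
  intro h
  have him : g 1 0 * τ.im = 0 := by
    have := congrArg Complex.im h; simpa using this
  have hc : g 1 0 = 0 := by
    rcases mul_eq_zero.mp him with h' | h'
    · exact h'
    · exact absurd h' hτ.ne'
  have hd : g 1 1 = 0 := by
    have := congrArg Complex.re h
    simp [hc] at this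
    exact_mod_cast this
  rw [Matrix.det_fin_two] at hg
  simp [hc, hd] at hg

lemma det_pos_im {g : Matrix (Fin 2) (Fin 2) ℝ} (hg : 0 < g.det) {τ : ℂ} (hτ : 0 < τ.im) :
    0 < ((((g 0 0 : ℂ)) * τ + (g 0 1 : ℂ)) / ((g 1 0 : ℂ) * τ + (g 1 1 : ℂ))).im := by
  have hD := det_pos_denom hg hτ
  have hns : 0 < Complex.normSq ((g 1 0 : ℂ) * τ + (g 1 1 : ℂ)) := Complex.normSq_pos.mpr hD
  rw [Complex.div_im, div_sub_div_same]
  apply div_pos _ hns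
  have : ((g 0 0 : ℂ) * τ + (g 0 1 : ℂ)).im * ((g 1 0 : ℂ) * τ + (g 1 1 : ℂ)).re -
      ((g 0 0 : ℂ) * τ + (g 0 1 : ℂ)).re * ((g 1 0 : ℂ) * τ + (g 1 1 : ℂ)).im
      = g.det * τ.im := by
    simp [Matrix.det_fin_two, Complex.add_im, Complex.add_re, Complex.mul_im, Complex.mul_re]
    ring
  rw [this]
  exact mul_pos hg hτ

/-- The weight-`w` slash action of a real `2×2` matrix on functions `ℂ → ℂ`. -/
noncomputable def slashM (w : ℤ) (g : Matrix (Fin 2) (Fin 2) ℝ) (F : ℂ → ℂ) : ℂ → ℂ :=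
  fun τ => ((g 1 0 : ℂ) * τ + (g 1 1 : ℂ)) ^ (-w) *
    F (((g 0 0 : ℂ) * τ + (g 0 1 : ℂ)) / ((g 1 0 : ℂ) * τ + (g 1 1 : ℂ)))

lemma slashM_mul (w : ℤ) (g h : Matrix (Fin 2) (Fin 2) ℝ) (F : ℂ → ℂ) (τ : ℂ)
    (hD : ((h 1 0 : ℂ) * τ + (h 1 1 : ℂ)) ≠ 0) :
    slashM w (g * h) F τ = slashM w h (slashM w g F) τ := by
  simp only [slashM, Matrix.mul_apply, Fin.sum_univ_two]
  push_cast
  set z := ((h 0 0 : ℂ) * τ + (h 0 1 : ℂ)) / ((h 1 0 : ℂ) * τ + (h 1 1 : ℂ)) with hz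
  have e1 : ((g 1 0 : ℂ) * (h 0 0 : ℂ) + (g 1 1 : ℂ) * (h 1 0 : ℂ)) * τ
        + ((g 1 0 : ℂ) * (h 0 1 : ℂ) + (g 1 1 : ℂ) * (h 1 1 : ℂ))
      = ((g 1 0 : ℂ) * z + (g 1 1 : ℂ)) * ((h 1 0 : ℂ) * τ + (h 1 1 : ℂ)) := by
    rw [hz]; field_simp; ring
  have e2 : ((g 0 0 : ℂ) * (h 0 0 : ℂ) + (g 0 1 : ℂ) * (h 1 0 : ℂ)) * τ
        + ((g 0 0 : ℂ) * (h 0 1 : ℂ) + (g 0 1 : ℂ) * (h 1 1 : ℂ))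
      = ((g 0 0 : ℂ) * z + (g 0 1 : ℂ)) * ((h 1 0 : ℂ) * τ + (h 1 1 : ℂ)) := by
    rw [hz]; field_simp; ring
  rw [e1, e2, mul_zpow, mul_div_mul_right _ _ hD]
  ring

lemma slashM_one (w : ℤ) (F : ℂ → ℂ) (τ : ℂ) : slashM w 1 F τ = F τ := by
  simp [slashM, Matrix.one_apply]

section
variable {w : ℤ} {Γ : Subgroup (Matrix.SpecialLinearGroup (Fin 2) ℝ)} {r : Γ → ℂ → ℂ}
  (hcoc : ∀ g h : Γ, ∀ τ : ℂ, 0 < τ.im →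
      r (g * h) τ
        = slashM w ((h : Matrix.SpecialLinearGroup (Fin 2) ℝ) : Matrix (Fin 2) (Fin 2) ℝ)
            (r g) τ + r h τ)

include hcoc

lemma cocycle_slash (g h : Γ) (N : Matrix (Fin 2) (Fin 2) ℝ) (hN : 0 < N.det)
    (τ : ℂ) (hτ : 0 < τ.im) :
    slashM w N (r (g * h)) τ
      = slashM w (((h : Matrix.SpecialLinearGroup (Fin 2) ℝ) : Matrix (Fin 2) (Fin 2) ℝ) * N)
          (r g) τ + slashM w N (r h) τ := by
  have hz := det_pos_im hN hτ
  rw [slashM_mul w _ N _ τ (det_pos_denom hN hτ)]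
  simp only [slashM]
  rw [hcoc g h _ hz]
  simp only [slashM]
  ring

lemma r_one (τ : ℂ) (hτ : 0 < τ.im) : r 1 τ = 0 := by
  have := hcoc 1 1 τ hτ
  simp only [mul_one] at this
  rw [show ((((1 : Γ) : Matrix.SpecialLinearGroup (Fin 2) ℝ)) : Matrix (Fin 2) (Fin 2) ℝ) = 1
    by simp, slashM_one] at this
  linear_combination -this

lemma slash_inv (g : Γ) (N : Matrix (Fin 2) (Fin 2) ℝ) (hN : 0 < N.det)
    (τ : ℂ) (hτ : 0 < τ.im) :
    slashM w N (r g⁻¹) τ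
      = - slashM w ((((g⁻¹ : Γ) : Matrix.SpecialLinearGroup (Fin 2) ℝ) : Matrix (Fin 2) (Fin 2) ℝ) * N)
          (r g) τ := by
  have h1 := cocycle_slash hcoc g g⁻¹ N hN τ hτ
  rw [mul_inv_cancel] at h1
  have h2 : slashM w N (r 1) τ = 0 := by
    simp only [slashM]
    rw [r_one hcoc _ (det_pos_im hN hτ), mul_zero]
  rw [h2] at h1
  linear_combination -h1

end

/-- Independence, up to coboundary, of the Hecke action on a cocycle
`r : Γ → (ℍ → ℂ)` from the choice of coset representatives:  with `M′_i = γ′_i·M_i`,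
`M_i·γ = γ_i·M_{π(i)}` and `δ_i = γ′_i·γ_i·(γ′_{π(i)})⁻¹`, one has
`Σ_i r(δ_i)|_w M′_{π(i)} − Σ_i r(γ_i)|_w M_{π(i)} = P|_w γ − P` where
`P = Σ_i r(γ′_i)|_w M_i`. -/
theorem hecke_action_representative_independence (w : ℤ)
    (Γ : Subgroup (Matrix.SpecialLinearGroup (Fin 2) ℝ))
    (r : Γ → ℂ → ℂ)
    (hcoc : ∀ g h : Γ, ∀ τ : ℂ, 0 < τ.im →
      r (g * h) τ
        = slashM w ((h : Matrix.SpecialLinearGroup (Fin 2) ℝ) : Matrix (Fin 2) (Fin 2) ℝ)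
            (r g) τ + r h τ)
    (s : ℕ) (M : Fin s → Matrix (Fin 2) (Fin 2) ℝ) (hM : ∀ i, 0 < (M i).det)
    (γ' : Fin s → Γ)
    (M' : Fin s → Matrix (Fin 2) (Fin 2) ℝ)
    (hM' : ∀ i, M' i
      = ((γ' i : Matrix.SpecialLinearGroup (Fin 2) ℝ) : Matrix (Fin 2) (Fin 2) ℝ) * M i)
    (γ : Γ) (γi : Fin s → Γ) (perm : Equiv.Perm (Fin s))
    (hrel : ∀ i, M i * ((γ : Matrix.SpecialLinearGroup (Fin 2) ℝ) : Matrix (Fin 2) (Fin 2) ℝ)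
      = ((γi i : Matrix.SpecialLinearGroup (Fin 2) ℝ) : Matrix (Fin 2) (Fin 2) ℝ) * M (perm i))
    (δ : Fin s → Γ) (hδ : ∀ i, δ i = γ' i * γi i * (γ' (perm i))⁻¹) :
    ∀ τ : ℂ, 0 < τ.im →
      (∑ i, slashM w (M' (perm i)) (r (δ i)) τ)
          - ∑ i, slashM w (M (perm i)) (r (γi i)) τ
        = slashM w ((γ : Matrix.SpecialLinearGroup (Fin 2) ℝ) : Matrix (Fin 2) (Fin 2) ℝ)
            (fun σ => ∑ i, slashM w (M i) (r (γ' i)) σ) τ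
          - ∑ i, slashM w (M i) (r (γ' i)) τ := by
  intro τ hτ
  have hdet1 : ∀ g : Γ,
      (((g : Matrix.SpecialLinearGroup (Fin 2) ℝ) : Matrix (Fin 2) (Fin 2) ℝ)).det = 1 :=
    fun g => (g : Matrix.SpecialLinearGroup (Fin 2) ℝ).2
  have hM'det : ∀ i, 0 < (M' i).det := by
    intro i; rw [hM' i, Matrix.det_mul, hdet1, one_mul]; exact hM i
  have hcancel : ∀ g : Γ,
      (((g⁻¹ : Γ) : Matrix.SpecialLinearGroup (Fin 2) ℝ) : Matrix (Fin 2) (Fin 2) ℝ)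
        * ((g : Matrix.SpecialLinearGroup (Fin 2) ℝ) : Matrix (Fin 2) (Fin 2) ℝ) = 1 := by
    intro g
    rw [show (((g⁻¹ : Γ) : Matrix.SpecialLinearGroup (Fin 2) ℝ))
        = ((g : Matrix.SpecialLinearGroup (Fin 2) ℝ))⁻¹ from rfl,
      ← Matrix.SpecialLinearGroup.coe_mul, inv_mul_cancel, Matrix.SpecialLinearGroup.coe_one]
  have key : ∀ i, slashM w (M' (perm i)) (r (δ i)) τ
      = slashM w (M i * ((γ : Matrix.SpecialLinearGroup (Fin 2) ℝ) : Matrix (Fin 2) (Fin 2) ℝ))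
          (r (γ' i)) τ
        + slashM w (M (perm i)) (r (γi i)) τ
        - slashM w (M (perm i)) (r (γ' (perm i))) τ := by
    intro i
    have h1 : ((((γ' (perm i))⁻¹ : Γ) : Matrix.SpecialLinearGroup (Fin 2) ℝ)
          : Matrix (Fin 2) (Fin 2) ℝ) * M' (perm i) = M (perm i) := by
      rw [hM' (perm i), ← mul_assoc, hcancel, one_mul]
    rw [hδ i, cocycle_slash hcoc (γ' i * γi i) (γ' (perm i))⁻¹ (M' (perm i)) (hM'det _) τ hτ,
      h1, cocycle_slash hcoc (γ' i) (γi i) (M (perm i)) (hM _) τ hτ, ← hrel i,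
      slash_inv hcoc (γ' (perm i)) (M' (perm i)) (hM'det _) τ hτ, h1]
    ring
  have hsum : ∑ i, slashM w (M' (perm i)) (r (δ i)) τ
      = (∑ i, slashM w (M i * ((γ : Matrix.SpecialLinearGroup (Fin 2) ℝ)
            : Matrix (Fin 2) (Fin 2) ℝ)) (r (γ' i)) τ)
        + (∑ i, slashM w (M (perm i)) (r (γi i)) τ)
        - ∑ i, slashM w (M (perm i)) (r (γ' (perm i))) τ := by
    rw [← Finset.sum_add_distrib, ← Finset.sum_sub_distrib]
    exact Finset.sum_congr rfl fun i _ => key i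
  have hperm : ∑ i, slashM w (M (perm i)) (r (γ' (perm i))) τ
      = ∑ i, slashM w (M i) (r (γ' i)) τ :=
    Equiv.sum_comp perm (fun j => slashM w (M j) (r (γ' j)) τ)
  have hγden : ((((γ : Matrix.SpecialLinearGroup (Fin 2) ℝ)
      : Matrix (Fin 2) (Fin 2) ℝ) 1 0 : ℂ) * τ
      + (((γ : Matrix.SpecialLinearGroup (Fin 2) ℝ) : Matrix (Fin 2) (Fin 2) ℝ) 1 1 : ℂ)) ≠ 0 :=
    det_pos_denom (by rw [hdet1]; norm_num) hτ
  have hRHS : slashM w ((γ : Matrix.SpecialLinearGroup (Fin 2) ℝ) : Matrix (Fin 2) (Fin 2) ℝ)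
        (fun σ => ∑ i, slashM w (M i) (r (γ' i)) σ) τ
      = ∑ i, slashM w (M i * ((γ : Matrix.SpecialLinearGroup (Fin 2) ℝ)
          : Matrix (Fin 2) (Fin 2) ℝ)) (r (γ' i)) τ := by
    have hterm : ∀ i, slashM w (M i * ((γ : Matrix.SpecialLinearGroup (Fin 2) ℝ)
          : Matrix (Fin 2) (Fin 2) ℝ)) (r (γ' i)) τ
        = slashM w ((γ : Matrix.SpecialLinearGroup (Fin 2) ℝ) : Matrix (Fin 2) (Fin 2) ℝ)
            (slashM w (M i) (r (γ' i))) τ := fun i => slashM_mul w _ _ _ τ hγden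
    simp only [hterm]
    simp only [slashM, Finset.mul_sum]
  rw [hsum, hperm, hRHS]
  ring
end

section
/- Let k ≥ 2 and n ≥ 1 be integers, let M ≥ 0 be an integer, and let a, b : ℤ → ℂ satisfy a_m = 0 and b_m = 0 for all m < −M. Then in the double sum S(a,b) := Σ_{m ∈ ℤ, m ≠ 0} Σ_{r ≥ 1, r | m, r | n} a_{−m}·(−m)^{1−k}·r^{k−1}·b_{mn/r²}, only finitely many terms are nonzero, and S(a,b) = (−1)^{k−1}·S(b,a). (Substituting m′ = −mn/r² and r′ = n/r gives a bijection between the index sets which proves the symmetry; this is the Fourier-coefficient form of the Hecke equivariance {F|_k T_n, G} = {F, G|_k T_n} of the Eichler pairing.) -/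
open Complex
open scoped Classical

/-- The general term of the double sum
`S(a,b) = Σ_{m ≠ 0} Σ_{r ≥ 1, r | m, r | n} a_{−m}·(−m)^{1−k}·r^{k−1}·b_{mn/r²}`,
indexed by `x = (m, r) ∈ ℤ × ℕ`. -/
noncomputable def heckeTerm (k n : ℕ) (a b : ℤ → ℂ) (x : ℤ × ℕ) : ℂ :=
  if x.1 ≠ 0 ∧ 1 ≤ x.2 ∧ (x.2 : ℤ) ∣ x.1 ∧ x.2 ∣ n then
    a (-x.1) * ((-x.1 : ℤ) : ℂ) ^ (1 - (k : ℤ)) * (x.2 : ℂ) ^ (k - 1) *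
      b (x.1 * (n : ℤ) / ((x.2 : ℤ)) ^ 2)
  else 0

namespace HeckeAux

def phi (n : ℕ) (x : ℤ × ℕ) : ℤ × ℕ := (-(x.1 * (n:ℤ) / ((x.2:ℤ))^2), n / x.2)

lemma phi_spec (n : ℕ) (hn : 1 ≤ n) (m : ℤ) (r : ℕ) (hm0 : m ≠ 0) (hr1 : 1 ≤ r)
    (hrm : (r:ℤ) ∣ m) (hrn : r ∣ n) :
    ∃ c : ℤ, ∃ d : ℕ, m = r * c ∧ n = r * d ∧ c ≠ 0 ∧ 1 ≤ d ∧
      phi n (m, r) = (-(c * d), d) := by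
  obtain ⟨c, hc⟩ := hrm
  obtain ⟨d, hd⟩ := hrn
  have hr0 : 0 < r := hr1
  have hd1 : 1 ≤ d := by
    rcases Nat.eq_zero_or_pos d with h | h
    · subst h; simp at hd; omega
    · exact h
  refine ⟨c, d, hc, hd, ?_, hd1, ?_⟩
  · rintro rfl; simp at hc; exact hm0 hc
  · unfold phi
    refine congrArg₂ Prod.mk ?_ ?_
    · congr 1
      rw [hc, hd]
      push_cast
      rw [show (r:ℤ) * c * ((r:ℤ) * d) = ((r:ℤ))^2 * (c * d) by ring]
      exact Int.mul_ediv_cancel_left _ (by positivity)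
    · rw [hd]
      exact Nat.mul_div_cancel_left d hr0

lemma cond_phi (n : ℕ) (hn : 1 ≤ n) (x : ℤ × ℕ)
    (h : x.1 ≠ 0 ∧ 1 ≤ x.2 ∧ (x.2 : ℤ) ∣ x.1 ∧ x.2 ∣ n) :
    (phi n x).1 ≠ 0 ∧ 1 ≤ (phi n x).2 ∧ ((phi n x).2 : ℤ) ∣ (phi n x).1 ∧
      (phi n x).2 ∣ n := by
  obtain ⟨m, r⟩ := x
  obtain ⟨hm0, hr1, hrm, hrn⟩ := h
  obtain ⟨c, d, hc, hd, hc0, hd1, hphi⟩ := phi_spec n hn m r hm0 hr1 hrm hrn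
  rw [hphi]
  have hd0 : (d:ℤ) ≠ 0 := by exact_mod_cast Nat.one_le_iff_ne_zero.mp hd1
  refine ⟨?_, hd1, ?_, ⟨r, by rw [hd]; ring⟩⟩
  · simp only [ne_eq, neg_eq_zero, mul_eq_zero, not_or]
    exact ⟨hc0, hd0⟩
  · exact Dvd.dvd.neg_right ⟨c, by ring⟩

lemma phi_phi (n : ℕ) (hn : 1 ≤ n) (x : ℤ × ℕ)
    (h : x.1 ≠ 0 ∧ 1 ≤ x.2 ∧ (x.2 : ℤ) ∣ x.1 ∧ x.2 ∣ n) :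
    phi n (phi n x) = x := by
  obtain ⟨m, r⟩ := x
  obtain ⟨hm0, hr1, hrm, hrn⟩ := h
  obtain ⟨c, d, hc, hd, hc0, hd1, hphi⟩ := phi_spec n hn m r hm0 hr1 hrm hrn
  rw [hphi]
  unfold phi
  refine congrArg₂ Prod.mk ?_ ?_
  · show -(-(c * (d:ℤ)) * (n:ℤ) / ((d:ℤ))^2) = m
    rw [hd, hc]
    push_cast
    rw [show -(c * (d:ℤ)) * ((r:ℤ) * d) = ((d:ℤ))^2 * (-(c * r)) by ring]
    rw [Int.mul_ediv_cancel_left _ (by positivity : ((d:ℤ))^2 ≠ 0)]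
    ring
  · show n / d = r
    rw [hd]
    exact Nat.mul_div_cancel r hd1

lemma scalar (k : ℕ) (hk : 2 ≤ k) (r c d : ℂ) (hr : r ≠ 0) (hc : c ≠ 0) (hd : d ≠ 0) :
    (-(r*c))^(1-(k:ℤ)) * r^(k-1) = (-1:ℂ)^(k-1) * ((c*d)^(1-(k:ℤ)) * d^(k-1)) := by
  have hk1 : ((k-1:ℕ):ℤ) = (k:ℤ)-1 := by push_cast [Nat.cast_sub (by omega : 1 ≤ k)]; ring
  rw [← zpow_natCast r (k-1), ← zpow_natCast d (k-1), ← zpow_natCast (-1:ℂ) (k-1), hk1]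
  rw [show (1-(k:ℤ)) = -((k:ℤ)-1) by ring]
  set e := (k:ℤ) - 1 with he
  have h1 : -(r*c) = (-1)*r*c := by ring
  rw [h1]
  simp only [mul_zpow, zpow_neg, mul_inv]
  have hm : ((-1:ℂ)^e)⁻¹ = (-1:ℂ)^e := by
    refine inv_eq_of_mul_eq_one_right ?_
    rw [← mul_zpow]
    norm_num
  rw [hm]
  have hre : r^e ≠ 0 := zpow_ne_zero _ hr
  have hce : c^e ≠ 0 := zpow_ne_zero _ hc
  have hde : d^e ≠ 0 := zpow_ne_zero _ hd
  field_simp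

lemma support_finite (k n : ℕ) (hn : 1 ≤ n) (M : ℕ) (a b : ℤ → ℂ)
    (ha : ∀ m : ℤ, m < -(M:ℤ) → a m = 0) (hb : ∀ m : ℤ, m < -(M:ℤ) → b m = 0) :
    (Function.support (heckeTerm k n a b)).Finite := by
  apply Set.Finite.subset (Set.finite_Icc ((-(M:ℤ)*n, 1) : ℤ × ℕ) (((M:ℤ), n) : ℤ × ℕ))
  rintro ⟨m, r⟩ hx
  rw [Function.mem_support, heckeTerm] at hx
  split_ifs at hx with h
  · obtain ⟨hm0, hr1, hrm, hrn⟩ := h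
    have h1 : a (-m) ≠ 0 := fun h => hx (by rw [h]; ring)
    have h2 : b (m * (n:ℤ) / ((r:ℤ))^2) ≠ 0 := fun h => hx (by rw [h]; ring)
    have hmM : m ≤ (M:ℤ) := by
      by_contra h
      exact h1 (ha _ (by omega))
    have hrn' : (r:ℤ) ≤ (n:ℤ) := by exact_mod_cast Nat.le_of_dvd hn hrn
    have hdvd : ((r:ℤ))^2 ∣ m * n := by
      rw [sq]
      exact mul_dvd_mul hrm (Int.natCast_dvd_natCast.mpr hrn)
    have hq : -(M:ℤ) ≤ m * (n:ℤ) / ((r:ℤ))^2 := by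
      by_contra h
      exact h2 (hb _ (by omega))
    have hmul : m * (n:ℤ) = (m * (n:ℤ) / ((r:ℤ))^2) * ((r:ℤ))^2 :=
      (Int.ediv_mul_cancel hdvd).symm
    have hr0 : (0:ℤ) < (r:ℤ) := by exact_mod_cast hr1
    have hn0 : (0:ℤ) < (n:ℤ) := by exact_mod_cast hn
    have h3 : -(M:ℤ) * ((r:ℤ))^2 ≤ m * n := by nlinarith [sq_nonneg ((r:ℤ))]
    have h4 : ((r:ℤ))^2 ≤ ((n:ℤ))^2 := by nlinarith
    have h5 : -(M:ℤ) * ((n:ℤ))^2 ≤ -(M:ℤ) * ((r:ℤ))^2 := by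
      have : (0:ℤ) ≤ (M:ℤ) := Int.natCast_nonneg M
      nlinarith
    have h6 : -(M:ℤ) * n ≤ m := by
      refine le_of_mul_le_mul_right ?_ hn0
      nlinarith
    exact ⟨⟨h6, hr1⟩, hmM, Nat.le_of_dvd hn hrn⟩
  · exact absurd rfl hx

lemma term_eq (k n : ℕ) (hk : 2 ≤ k) (hn : 1 ≤ n) (a b : ℤ → ℂ) (x : ℤ × ℕ)
    (h : x.1 ≠ 0 ∧ 1 ≤ x.2 ∧ (x.2 : ℤ) ∣ x.1 ∧ x.2 ∣ n) :
    heckeTerm k n a b x = (-1:ℂ)^(k-1) * heckeTerm k n b a (phi n x) := by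
  have h2 := cond_phi n hn x h
  obtain ⟨m, r⟩ := x
  obtain ⟨hm0, hr1, hrm, hrn⟩ := h
  obtain ⟨c, d, hc, hd, hc0, hd1, hphi⟩ := phi_spec n hn m r hm0 hr1 hrm hrn
  rw [hphi] at h2
  rw [hphi]
  have hdiv : m * (n:ℤ) / ((r:ℤ))^2 = c * d := by
    have := congrArg Prod.fst hphi
    simp only [phi] at this
    exact neg_injective this
  have hdiv2 : -(c * (d:ℤ)) * (n:ℤ) / ((d:ℤ))^2 = -((r:ℤ) * c) := by
    rw [hd]
    push_cast
    rw [show -(c * (d:ℤ)) * ((r:ℤ) * d) = ((d:ℤ))^2 * (-((r:ℤ) * c)) by ring]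
    exact Int.mul_ediv_cancel_left _ (by positivity)
  rw [heckeTerm, heckeTerm, if_pos ⟨hm0, hr1, hrm, hrn⟩, if_pos h2]
  simp only [hdiv, hdiv2, neg_neg]
  rw [hc]
  have hr0 : ((r:ℤ):ℂ) ≠ 0 := by exact_mod_cast Nat.one_le_iff_ne_zero.mp hr1
  have hd0 : ((d:ℤ):ℂ) ≠ 0 := by exact_mod_cast Nat.one_le_iff_ne_zero.mp hd1
  have hc0' : (c:ℂ) ≠ 0 := by exact_mod_cast hc0
  have hs := scalar k hk (r:ℂ) (c:ℂ) (d:ℂ) (by exact_mod_cast hr0) hc0' (by exact_mod_cast hd0)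
  push_cast
  linear_combination (a (-((r:ℤ) * c)) * b (c * (d:ℤ))) * hs

end HeckeAux

open HeckeAux

/-- If `a_m = b_m = 0` for `m < −M`, then the double sum `S(a,b)` has only
finitely many nonzero terms and satisfies `S(a,b) = (−1)^{k−1}·S(b,a)`. -/
theorem hecke_pairing_symmetry (k n : ℕ) (hk : 2 ≤ k) (hn : 1 ≤ n) (M : ℕ)
    (a b : ℤ → ℂ)
    (ha : ∀ m : ℤ, m < -(M : ℤ) → a m = 0)
    (hb : ∀ m : ℤ, m < -(M : ℤ) → b m = 0) :
    (Function.support (heckeTerm k n a b)).Finite ∧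
      ∑ᶠ x : ℤ × ℕ, heckeTerm k n a b x
        = (-1 : ℂ) ^ (k - 1) * ∑ᶠ x : ℤ × ℕ, heckeTerm k n b a x := by
  have hf1 := support_finite k n hn M a b ha hb
  have hf2 := support_finite k n hn M b a hb ha
  refine ⟨hf1, ?_⟩
  rw [finsum_eq_sum _ hf1, finsum_eq_sum _ hf2, Finset.mul_sum]
  have hcond : ∀ (f g : ℤ → ℂ) (x : ℤ × ℕ), heckeTerm k n f g x ≠ 0 →
      x.1 ≠ 0 ∧ 1 ≤ x.2 ∧ (x.2 : ℤ) ∣ x.1 ∧ x.2 ∣ n := by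
    intro f g x hx
    by_contra h
    exact hx (by rw [heckeTerm, if_neg h])
  have hne : (-1:ℂ)^(k-1) ≠ 0 := by
    apply pow_ne_zero; norm_num
  refine Finset.sum_nbij' (phi n) (phi n) ?_ ?_ ?_ ?_ ?_
  · intro x hx
    rw [Set.Finite.mem_toFinset, Function.mem_support] at hx ⊢
    have hc := hcond a b x hx
    rw [term_eq k n hk hn a b x hc] at hx
    intro h0
    exact hx (by rw [h0, mul_zero])
  · intro y hy
    rw [Set.Finite.mem_toFinset, Function.mem_support] at hy ⊢
    have hc := hcond b a y hy
    rw [term_eq k n hk hn b a y hc] at hy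
    intro h0
    exact hy (by rw [h0, mul_zero])
  · intro x hx
    rw [Set.Finite.mem_toFinset, Function.mem_support] at hx
    exact phi_phi n hn x (hcond a b x hx)
  · intro y hy
    rw [Set.Finite.mem_toFinset, Function.mem_support] at hy
    exact phi_phi n hn y (hcond b a y hy)
  · intro x hx
    rw [Set.Finite.mem_toFinset, Function.mem_support] at hx
    exact term_eq k n hk hn a b x (hcond a b x hx)
end

section
/- (Invariance of the Haberland pairing.) Let k ≥ 2 be an integer and define, for complex polynomials p(τ) = Σ_{i=0}^{k−2} p_i τ^i and q(τ) = Σ_{i=0}^{k−2} q_i τ^i of degree at most k−2, the pairing ⟨p, q⟩ = Σ_{i=0}^{k−2} (−1)^i · binom(k−2, i)^{−1} · p_i · q_{k−2−i}. Then for every g = (a b; c d) ∈ SL(2, ℤ): (i) the function (p|_{2−k} g)(τ) = (cτ+d)^{k−2}·p((aτ+b)/(cτ+d)) is again a polynomial in τ of degree at most k−2, and (ii) ⟨p|_{2−k} g, q|_{2−k} g⟩ = ⟨p, q⟩. -/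
open Complex

/-- The Haberland pairing
`⟨p, q⟩ = Σ_{i=0}^{k−2} (−1)^i·binom(k−2,i)⁻¹·p_i·q_{k−2−i}` on polynomials of degree at
most `k−2`. -/
noncomputable def haberland (k : ℕ) (p q : Polynomial ℂ) : ℂ :=
  ∑ i ∈ Finset.range (k - 1),
    (-1 : ℂ) ^ i * ((Nat.choose (k - 2) i : ℂ))⁻¹ * p.coeff i * q.coeff (k - 2 - i)

/-!
On a pure power `(uX + v)ⁿ` the slash action by `g = (a b; c d)` is the row-vector action
`(u, v) ↦ (u, v) g`, and the pairing of `(αX + β)ⁿ` with `(γX + δ)ⁿ` is the `n`-th power of the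
determinant `βγ - αδ`. Hence `⟨p|g, q|g⟩ = (det g)ⁿ ⟨p, q⟩` on pure powers, and by bilinearity
everywhere, because the powers `(X + t)ⁿ` span the polynomials of degree at most `n`: a linear
functional vanishing on all of them turns into a polynomial in `t` with infinitely many roots.
-/

open Polynomial Finset

namespace Polynomial

theorem coeff_linear_pow {R : Type*} [CommSemiring R] (u v : R) (n i : ℕ) :
    ((C u * X + C v) ^ n).coeff i = n.choose i * u ^ i * v ^ (n - i) := by
  simp only [add_pow, finsetSum_coeff, mul_pow, ← C_pow, ← C_eq_natCast, coeff_mul_C, coeff_C_mul,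
    coeff_X_pow, mul_ite, ite_mul, mul_one, mul_zero, zero_mul, sum_ite_eq, mem_range]
  split_ifs with hi
  · ring
  · simp [Nat.choose_eq_zero_of_lt (by omega : n < i)]

variable {K : Type*} [Field K]

theorem linearMap_apply_eq_sum_coeff_mul (ℓ : K[X] →ₗ[K] K) {n : ℕ} {p : K[X]}
    (hp : p.natDegree ≤ n) : ℓ p = ∑ i ∈ range (n + 1), p.coeff i * ℓ (X ^ i) := by
  conv_lhs => rw [p.as_sum_range' (n + 1) (Nat.lt_succ_of_le hp)]
  simp [← smul_X_eq_monomial]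

theorem linearMap_apply_eq_zero_of_X_add_C_pow [CharZero K] (ℓ : K[X] →ₗ[K] K) {n : ℕ}
    (h : ∀ t, ℓ ((X + C t) ^ n) = 0) {p : K[X]} (hp : p.natDegree ≤ n) : ℓ p = 0 := by
  set Q : K[X] := ∑ i ∈ range (n + 1), C (n.choose i * ℓ (X ^ i)) * X ^ (n - i)
  have hQ : Q = 0 := funext fun t => by
    rw [eval_zero, ← h t, linearMap_apply_eq_sum_coeff_mul ℓ (natDegree_pow_X_add_C n t).le,
      eval_finsetSum]
    refine Finset.sum_congr rfl fun i _ => ?_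
    simp only [eval_mul, eval_C, eval_pow, eval_X, coeff_X_add_C_pow]
    ring
  have hX : ∀ i ≤ n, ℓ (X ^ i) = 0 := fun i hi => by
    have := congrArg (coeff · (n - i)) hQ
    simp only [Q, finsetSum_coeff, coeff_C_mul_X_pow, coeff_zero] at this
    rw [sum_eq_single i (fun j hj _ => if_neg (by simp at hj; omega)) (by simp; omega),
      if_pos rfl] at this
    exact (mul_eq_zero.1 this).resolve_left (Nat.cast_ne_zero.2 (Nat.choose_pos hi).ne')
  rw [linearMap_apply_eq_sum_coeff_mul ℓ hp]
  exact sum_eq_zero fun i hi => by rw [hX i (by simp at hi; omega), mul_zero]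

theorem bilinMap_apply_eq_zero_of_X_add_C_pow [CharZero K] (B : K[X] →ₗ[K] K[X] →ₗ[K] K) {n : ℕ}
    (h : ∀ s t, B ((X + C s) ^ n) ((X + C t) ^ n) = 0) {p q : K[X]} (hp : p.natDegree ≤ n)
    (hq : q.natDegree ≤ n) : B p q = 0 :=
  linearMap_apply_eq_zero_of_X_add_C_pow (B p)
    (fun t => linearMap_apply_eq_zero_of_X_add_C_pow (B.flip _) (fun s => h s t) hp) hq

end Polynomial

section Slash

variable {R : Type*} [CommRing R]

-- `(cX + d)ⁿ · p((aX + b)/(cX + d))` expanded termwise, so that no division occurs; only the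
-- coefficients of `p` up to degree `n` enter.
noncomputable def slashPoly (n : ℕ) (a b c d : R) : R[X] →ₗ[R] R[X] :=
  ∑ i ∈ range (n + 1), (lcoeff R i).smulRight ((C a * X + C b) ^ i * (C c * X + C d) ^ (n - i))

theorem slashPoly_apply (n : ℕ) (a b c d : R) (p : R[X]) :
    slashPoly n a b c d p =
      ∑ i ∈ range (n + 1), p.coeff i • ((C a * X + C b) ^ i * (C c * X + C d) ^ (n - i)) := by
  simp [slashPoly]

theorem natDegree_slashPoly_le (n : ℕ) (a b c d : R) (p : R[X]) :
    (slashPoly n a b c d p).natDegree ≤ n := by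
  rw [slashPoly_apply]
  refine natDegree_sum_le_of_forall_le _ _ fun i hi => ?_
  calc _ ≤ ((C a * X + C b) ^ i * (C c * X + C d) ^ (n - i)).natDegree := natDegree_smul_le _ _
    _ ≤ i * 1 + (n - i) * 1 := natDegree_mul_le_of_le (natDegree_pow_le_of_le _ natDegree_linear_le)
        (natDegree_pow_le_of_le _ natDegree_linear_le)
    _ ≤ n := by simp at hi; omega

theorem slashPoly_linear_pow (n : ℕ) (a b c d u v : R) :
    slashPoly n a b c d ((C u * X + C v) ^ n) =
      (C (u * a + v * c) * X + C (u * b + v * d)) ^ n := by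
  rw [show C (u * a + v * c) * X + C (u * b + v * d) =
      C u * (C a * X + C b) + C v * (C c * X + C d) by simp only [map_add, map_mul]; ring,
    add_pow (C u * (C a * X + C b)), slashPoly_apply]
  refine Finset.sum_congr rfl fun i _ => ?_
  rw [coeff_linear_pow, smul_eq_C_mul]
  simp only [map_mul, map_pow, map_natCast, mul_pow]
  ring

theorem eval_slashPoly {K : Type*} [Field K] (n : ℕ) (a b c d : K) {p : K[X]}
    (hp : p.natDegree ≤ n) {τ : K} (hτ : c * τ + d ≠ 0) :
    (slashPoly n a b c d p).eval τ = (c * τ + d) ^ n * p.eval ((a * τ + b) / (c * τ + d)) := by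
  rw [slashPoly_apply, eval_finsetSum, eval_eq_sum_range' (Nat.lt_succ_of_le hp), mul_sum]
  refine Finset.sum_congr rfl fun i hi => ?_
  simp only [eval_smul, eval_mul, eval_pow, eval_add, eval_C, eval_X, smul_eq_mul]
  rw [div_pow, pow_sub₀ _ hτ (by simpa [Nat.lt_succ_iff] using hi)]
  field_simp

end Slash

noncomputable def haberlandForm (k : ℕ) : ℂ[X] →ₗ[ℂ] ℂ[X] →ₗ[ℂ] ℂ :=
  LinearMap.mk₂ ℂ (haberland k)
    (fun p p' q => by simp only [haberland, coeff_add, mul_add, add_mul, sum_add_distrib])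
    (fun r p q => by
      simp only [haberland, coeff_smul, smul_eq_mul, mul_sum, mul_assoc, mul_left_comm r])
    (fun p q q' => by simp only [haberland, coeff_add, mul_add, sum_add_distrib])
    (fun r p q => by
      simp only [haberland, coeff_smul, smul_eq_mul, mul_sum, mul_assoc, mul_left_comm r])

theorem haberlandForm_apply (k : ℕ) (p q : ℂ[X]) : haberlandForm k p q = haberland k p q := rfl

theorem haberland_linear_pow (n : ℕ) (α β γ δ : ℂ) :
    haberland (n + 2) ((C α * X + C β) ^ n) ((C γ * X + C δ) ^ n) = (β * γ - α * δ) ^ n := by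
  rw [haberland, sub_eq_neg_add, add_pow (-(α * δ))]
  refine Finset.sum_congr rfl fun i hi => ?_
  have hi : i ≤ n := by simpa [Nat.lt_succ_iff] using hi
  have hchoose : (n.choose i : ℂ) ≠ 0 := Nat.cast_ne_zero.2 (Nat.choose_pos hi).ne'
  simp only [Nat.add_sub_cancel, coeff_linear_pow, Nat.choose_symm hi, Nat.sub_sub_self hi]
  field_simp
  ring

theorem haberland_slashPoly (n : ℕ) (a b c d : ℂ) {p q : ℂ[X]} (hp : p.natDegree ≤ n)
    (hq : q.natDegree ≤ n) :
    haberland (n + 2) (slashPoly n a b c d p) (slashPoly n a b c d q) =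
      (a * d - b * c) ^ n * haberland (n + 2) p q := by
  have hpure : ∀ s t : ℂ,
      haberland (n + 2) (slashPoly n a b c d ((X + C s) ^ n))
          (slashPoly n a b c d ((X + C t) ^ n)) =
        (a * d - b * c) ^ n * haberland (n + 2) ((X + C s) ^ n) ((X + C t) ^ n) := fun s t => by
    rw [← one_mul X, ← C_1, slashPoly_linear_pow, slashPoly_linear_pow, haberland_linear_pow,
      haberland_linear_pow, ← mul_pow]
    congr 1
    ring
  have := bilinMap_apply_eq_zero_of_X_add_C_pow
    ((haberlandForm (n + 2)).compl₁₂ (slashPoly n a b c d) (slashPoly n a b c d) -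
      (a * d - b * c) ^ n • haberlandForm (n + 2))
    (fun s t => by simpa [haberlandForm_apply, sub_eq_zero] using hpure s t) hp hq
  simpa [haberlandForm_apply, sub_eq_zero] using this

/-- **invariance of the Haberland pairing.**  For `g = (a b; c d) ∈ SL(2, ℤ)` and
polynomials `p, q` of degree at most `k−2`, (i) `(p|_{2−k}g)(τ) = (cτ+d)^{k−2}·p(gτ)` is again a
polynomial of degree at most `k−2` (likewise for `q`), and (ii) the Haberland pairing is
invariant: `⟨p|_{2−k}g, q|_{2−k}g⟩ = ⟨p, q⟩`. -/
theorem haberland_pairing_invariance (k : ℕ) (hk : 2 ≤ k)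
    (a b c d : ℤ) (hdet : a * d - b * c = 1)
    (p q : Polynomial ℂ) (hp : p.natDegree ≤ k - 2) (hq : q.natDegree ≤ k - 2) :
    ∃ P Q : Polynomial ℂ,
      P.natDegree ≤ k - 2 ∧ Q.natDegree ≤ k - 2 ∧
      (∀ τ : ℂ, (c : ℂ) * τ + (d : ℂ) ≠ 0 →
        P.eval τ = ((c : ℂ) * τ + (d : ℂ)) ^ (k - 2) *
          p.eval (((a : ℂ) * τ + (b : ℂ)) / ((c : ℂ) * τ + (d : ℂ)))) ∧
      (∀ τ : ℂ, (c : ℂ) * τ + (d : ℂ) ≠ 0 →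
        Q.eval τ = ((c : ℂ) * τ + (d : ℂ)) ^ (k - 2) *
          q.eval (((a : ℂ) * τ + (b : ℂ)) / ((c : ℂ) * τ + (d : ℂ)))) ∧
      haberland k P Q = haberland k p q := by
  obtain ⟨n, rfl⟩ := Nat.exists_eq_add_of_le' hk
  rw [Nat.add_sub_cancel] at hp hq ⊢
  have hdetC : (a * d - b * c : ℂ) = 1 := by exact_mod_cast hdet
  refine ⟨slashPoly n (a : ℂ) b c d p, slashPoly n (a : ℂ) b c d q, natDegree_slashPoly_le ..,
    natDegree_slashPoly_le .., fun τ => eval_slashPoly n _ _ _ _ hp,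
    fun τ => eval_slashPoly n _ _ _ _ hq, ?_⟩
  rw [haberland_slashPoly n _ _ _ _ hp hq, hdetC, one_pow, one_mul]
end

section
/- Let α, x, y ∈ ℂ with α ∉ {0, 1, −1}, x ∉ {0, 1}, y ≠ 0, x²α² ≠ y², and suppose y² = x(x−1)(x−1+α²) (the Legendre relation with λ = 1 − α²). Define Y₁ = (xα + y)/(xα − y) and Y₂ = x(1−x)/y. Then Y₁ ≠ 0, Y₂ ≠ 0, and (Y₁ − Y₁^{−1})·(Y₂ − Y₂^{−1}) = 4α. (This is the explicit isomorphism from the Legendre curve L_{1−α²} to the genus-one curve C_α : (Y₁ − 1/Y₁)(Y₂ − 1/Y₂) = 4α.) -/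
/-- With `λ = 1 − α²` and `y² = x(x−1)(x−λ)` (the Legendre curve), the map
`(x, y) ↦ (Y₁, Y₂) = ((xα+y)/(xα−y), x(1−x)/y)` lands on the curve
`C_α : (Y₁ − 1/Y₁)(Y₂ − 1/Y₂) = 4α`, with `Y₁, Y₂ ≠ 0`. -/
theorem legendre_to_Calpha (α x y : ℂ)
    (hα0 : α ≠ 0) (hα1 : α ≠ 1) (hαm1 : α ≠ -1)
    (hx0 : x ≠ 0) (hx1 : x ≠ 1) (hy : y ≠ 0)
    (hne : x ^ 2 * α ^ 2 ≠ y ^ 2)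
    (hcurve : y ^ 2 = x * (x - 1) * (x - 1 + α ^ 2)) :
    (x * α + y) / (x * α - y) ≠ 0 ∧ x * (1 - x) / y ≠ 0 ∧
      ((x * α + y) / (x * α - y) - ((x * α + y) / (x * α - y))⁻¹) *
        (x * (1 - x) / y - (x * (1 - x) / y)⁻¹) = 4 * α := by
  have hsum : x * α + y ≠ 0 := by
    intro h
    apply hne
    have : y = -(x * α) := by linear_combination h
    rw [this]; ring
  have hdiff : x * α - y ≠ 0 := by
    intro h
    apply hne
    have : y = x * α := by linear_combination -h
    rw [this]; ring
  have hx1' : (1 : ℂ) - x ≠ 0 := fun h => hx1 (by linear_combination -h)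
  refine ⟨div_ne_zero hsum hdiff, div_ne_zero (mul_ne_zero hx0 hx1') hy, ?_⟩
  field_simp
  ring_nf
  linear_combination (-4 * α * x ^ 2 * y) * hcurve
end

section
/- Let α, Y₁, Y₂ ∈ ℂ with α ≠ 0, Y₁, Y₂ ∉ {0, 1, −1}, and suppose (Y₁ − Y₁^{−1})·(Y₂ − Y₂^{−1}) = 4α. Define W₁ = (Y₁ − 1)/(Y₁ + 1) and W₂ = (Y₂ − 1)/(Y₂ + 1). Then W₁ ≠ 0, W₂ ≠ 0, and (W₁ − W₁^{−1})·(W₂ − W₂^{−1}) = 4/α. (This is the explicit isomorphism C_α → C_{1/α}.) -/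
/-- The map `(Y₁, Y₂) ↦ (W₁, W₂) = ((Y₁−1)/(Y₁+1), (Y₂−1)/(Y₂+1))` takes the
curve `C_α : (Y₁ − 1/Y₁)(Y₂ − 1/Y₂) = 4α` to the curve `C_{1/α}`, i.e.
`(W₁ − 1/W₁)(W₂ − 1/W₂) = 4/α`, with `W₁, W₂ ≠ 0`. -/
theorem Calpha_involution (α Y₁ Y₂ : ℂ) (hα : α ≠ 0)
    (h10 : Y₁ ≠ 0) (h11 : Y₁ ≠ 1) (h1m : Y₁ ≠ -1)
    (h20 : Y₂ ≠ 0) (h21 : Y₂ ≠ 1) (h2m : Y₂ ≠ -1)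
    (hC : (Y₁ - Y₁⁻¹) * (Y₂ - Y₂⁻¹) = 4 * α) :
    (Y₁ - 1) / (Y₁ + 1) ≠ 0 ∧ (Y₂ - 1) / (Y₂ + 1) ≠ 0 ∧
      ((Y₁ - 1) / (Y₁ + 1) - ((Y₁ - 1) / (Y₁ + 1))⁻¹) *
        ((Y₂ - 1) / (Y₂ + 1) - ((Y₂ - 1) / (Y₂ + 1))⁻¹) = 4 / α := by
  have h1s : Y₁ - 1 ≠ 0 := sub_ne_zero.mpr h11
  have h1a : Y₁ + 1 ≠ 0 := fun h => h1m (by linear_combination h)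
  have h2s : Y₂ - 1 ≠ 0 := sub_ne_zero.mpr h21
  have h2a : Y₂ + 1 ≠ 0 := fun h => h2m (by linear_combination h)
  refine ⟨div_ne_zero h1s h1a, div_ne_zero h2s h2a, ?_⟩
  field_simp at hC ⊢
  ring_nf
  ring_nf at hC
  linear_combination -4 * hC
end

section
/- Let χ be the unique nontrivial Dirichlet character modulo 4, and for n ≥ 1 set c_n = Σ_{d | n, d ≥ 1} d²·χ(d). Then for every s ∈ ℂ with Re s > 3, the integral ∫_{0}^{∞} (Σ_{n=1}^{∞} c_n e^{−2πnx}) · x^{s−1} dx converges absolutely and equals (2π)^{−s} · Γ(s) · ζ(s) · L(χ, s−2), where Γ is the Gamma function, ζ is the Riemann zeta function, and L(χ, ·) is the Dirichlet L-function of χ. (The integrand is E_{3,−4}(ix) + 1/4 for the weight-3 Eisenstein series E_{3,−4}.) -/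
/-!
Expanding the q-series termwise, each `e^{-2πnx}` has Mellin transform `Γ(s) (2πn)^{-s}`, so the
Mellin transform is `(2π)^{-s} Γ(s) Σ c_n n^{-s}`. Exchanging sum and integral is legitimate because
`Σ |c_n| n^{-Re s}` converges: the coefficients are the Dirichlet convolution `c = 1 ⍟ (n² χ)`,
so this Dirichlet series is the product of `ζ(s)` and `L(χ, s - 2)`, both absolutely convergent
for `Re s > 3`.
-/

open Complex MeasureTheory

noncomputable def chiFour (n : ℕ) : ℂ :=
  if n % 4 = 1 then 1 else if n % 4 = 3 then -1 else 0

/-- The Fourier coefficients `c_n = Σ_{d | n} d²·χ(d)` of the weight-3 Eisenstein series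
`E_{3,−4}(τ) + 1/4`. -/
noncomputable def eisensteinCoeff (n : ℕ) : ℂ :=
  ∑ d ∈ n.divisors, (d : ℂ) ^ 2 * chiFour d

open LSeries Set
open scoped LSeries.notation

lemma integrable_tsum_of_lintegral_ne_top {α E ι : Type*} [MeasurableSpace α] {μ : Measure α}
    [NormedAddCommGroup E] [CompleteSpace E] [Countable ι] {f : ι → α → E}
    (hf : ∀ i, AEStronglyMeasurable (f i) μ) (hf' : ∑' i, ∫⁻ a, ‖f i a‖ₑ ∂μ ≠ ⊤) :
    Integrable (fun a ↦ ∑' i, f i a) μ := by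
  have hlint : ∫⁻ a, ∑' i, ‖f i a‖ₑ ∂μ = ∑' i, ∫⁻ a, ‖f i a‖ₑ ∂μ :=
    lintegral_tsum fun i ↦ (hf i).enorm
  have hfin : ∀ᵐ a ∂μ, ∑' i, ‖f i a‖ₑ < ⊤ :=
    ae_lt_top' (AEMeasurable.tsum fun i ↦ (hf i).enorm) (hlint ▸ hf')
  have hsum : ∀ᵐ a ∂μ, HasSum (fun i ↦ f i a) (∑' i, f i a) := hfin.mono fun a ha ↦
    (Summable.of_nnnorm (ENNReal.tsum_coe_ne_top_iff_summable.mp ha.ne)).hasSum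
  refine ⟨aestronglyMeasurable_of_tendsto_ae _
    (fun s ↦ Finset.aestronglyMeasurable_fun_sum s fun i _ ↦ hf i) hsum, ?_⟩
  exact (lintegral_mono fun a ↦ enorm_tsum_le_tsum_enorm).trans_lt (hlint ▸ hf'.lt_top)

lemma lintegral_enorm_cpow_mul_exp_neg_mul {s : ℂ} (hs : 0 < s.re) {p : ℝ} (hp : 0 < p) :
    ∫⁻ t in Ioi (0 : ℝ), ‖(t : ℂ) ^ (s - 1) * Real.exp (-p * t)‖ₑ =
      ENNReal.ofReal (Real.Gamma s.re / p ^ s.re) := by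
  have hint : IntegrableOn (fun t : ℝ ↦ t ^ (s.re - 1) * Real.exp (-p * t)) (Ioi 0) := by
    simpa only [Real.rpow_one] using
      integrableOn_rpow_mul_exp_neg_mul_rpow (by linarith : -1 < s.re - 1) one_pos hp
  calc ∫⁻ t in Ioi (0 : ℝ), ‖(t : ℂ) ^ (s - 1) * Real.exp (-p * t)‖ₑ
      = ∫⁻ t in Ioi (0 : ℝ), ENNReal.ofReal (t ^ (s.re - 1) * Real.exp (-p * t)) := by
        refine setLIntegral_congr_fun measurableSet_Ioi fun t ht ↦ ?_
        rw [← ofReal_norm, norm_mul, norm_cpow_eq_rpow_re_of_pos ht, norm_real,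
          Real.norm_of_nonneg (Real.exp_pos _).le, sub_re, one_re]
    _ = ENNReal.ofReal (∫ t in Ioi (0 : ℝ), t ^ (s.re - 1) * Real.exp (-p * t)) :=
        (ofReal_integral_eq_lintegral_ofReal hint
          ((ae_restrict_iff' measurableSet_Ioi).mpr (ae_of_all _ fun t ht ↦
            mul_nonneg (Real.rpow_nonneg (le_of_lt ht) _) (Real.exp_pos _).le))).symm
    _ = ENNReal.ofReal (Real.Gamma s.re / p ^ s.re) := by
        simp_rw [neg_mul]
        rw [Real.integral_rpow_mul_exp_neg_mul_Ioi hs hp, one_div, Real.inv_rpow hp.le,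
          div_eq_inv_mul]

lemma mellinConvergent_of_hasSum {ι : Type*} [Countable ι] {a : ι → ℂ} {p : ι → ℝ} {F : ℝ → ℂ}
    {s : ℂ} (hp : ∀ i, a i = 0 ∨ 0 < p i) (hs : 0 < s.re)
    (hF : ∀ t ∈ Ioi 0, HasSum (fun i ↦ a i * Real.exp (-p i * t)) (F t))
    (h_sum : Summable fun i ↦ ‖a i‖ / p i ^ s.re) :
    MellinConvergent F s := by
  set g : ι → ℝ → ℂ := fun i t ↦ a i * ((t : ℂ) ^ (s - 1) * Real.exp (-p i * t))
  have hlint (i : ι) : ∫⁻ t in Ioi (0 : ℝ), ‖g i t‖ₑ =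
      ENNReal.ofReal (‖a i‖ * (Real.Gamma s.re / p i ^ s.re)) := by
    rcases hp i with ha | hpi
    · simp [g, ha]
    · simp only [g]
      rw [lintegral_congr fun t ↦ enorm_mul _ _, lintegral_const_mul' _ _ enorm_ne_top,
        lintegral_enorm_cpow_mul_exp_neg_mul hs hpi, ← ofReal_norm,
        ← ENNReal.ofReal_mul (norm_nonneg _)]
  have hnonneg (i : ι) : 0 ≤ ‖a i‖ * (Real.Gamma s.re / p i ^ s.re) := by
    rcases hp i with ha | hpi
    · simp [ha]
    · have := Real.Gamma_pos_of_pos hs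
      positivity
  have hg : IntegrableOn (fun t ↦ ∑' i, g i t) (Ioi 0) := by
    refine integrable_tsum_of_lintegral_ne_top (fun i ↦ by fun_prop) ?_
    simp_rw [hlint]
    rw [← ENNReal.ofReal_tsum_of_nonneg hnonneg]
    · exact ENNReal.ofReal_ne_top
    · exact (h_sum.mul_left (Real.Gamma s.re)).congr fun i ↦ by ring
  refine hg.congr_fun (fun t ht ↦ ?_) measurableSet_Ioi
  simp only [g, smul_eq_mul, ← (hF t ht).tsum_eq, ← tsum_mul_left]
  exact tsum_congr fun i ↦ by ring

section DirichletSeries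

variable {f : ℕ → ℂ} {c : ℝ} {F : ℝ → ℂ} {s : ℂ}

lemma apply_eq_zero_or_mul_natCast_pos (hf0 : f 0 = 0) (hc : 0 < c) (n : ℕ) :
    f n = 0 ∨ 0 < c * n := by
  rcases eq_or_ne n 0 with rfl | hn
  · exact Or.inl hf0
  · exact Or.inr (by positivity)

lemma summable_norm_div_mul_natCast_rpow (hf0 : f 0 = 0) (hc : 0 < c)
    (hf : LSeriesSummable f s) :
    Summable fun n : ℕ ↦ ‖f n‖ / (c * n) ^ s.re := by
  refine (hf.norm.div_const (c ^ s.re)).congr fun n ↦ ?_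
  rcases eq_or_ne n 0 with rfl | hn
  · simp [hf0]
  · rw [norm_term_eq, if_neg hn, Real.mul_rpow hc.le n.cast_nonneg, div_div, mul_comm]

lemma Gamma_mul_div_mul_natCast_cpow (hf0 : f 0 = 0) (hc : 0 < c) (n : ℕ) :
    Gamma s * f n / ((c * n : ℝ) : ℂ) ^ s = (c : ℂ) ^ (-s) * Gamma s * term f s n := by
  rcases eq_or_ne n 0 with rfl | hn
  · simp [hf0]
  · rw [term_of_ne_zero hn, ofReal_mul, mul_cpow_ofReal_nonneg hc.le n.cast_nonneg,
      ofReal_natCast, cpow_neg]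
    field_simp

lemma mellinConvergent_of_hasSum_LSeries (hf0 : f 0 = 0) (hc : 0 < c) (hs : 0 < s.re)
    (hF : ∀ t ∈ Ioi 0, HasSum (fun n ↦ f n * Real.exp (-(c * n) * t)) (F t))
    (hf : LSeriesSummable f s) :
    MellinConvergent F s :=
  mellinConvergent_of_hasSum (apply_eq_zero_or_mul_natCast_pos hf0 hc) hs hF
    (summable_norm_div_mul_natCast_rpow hf0 hc hf)

lemma mellin_eq_cpow_mul_Gamma_mul_LSeries (hf0 : f 0 = 0) (hc : 0 < c) (hs : 0 < s.re)
    (hF : ∀ t ∈ Ioi 0, HasSum (fun n ↦ f n * Real.exp (-(c * n) * t)) (F t))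
    (hf : LSeriesSummable f s) :
    mellin F s = (c : ℂ) ^ (-s) * Gamma s * LSeries f s := by
  rw [← (hasSum_mellin (apply_eq_zero_or_mul_natCast_pos hf0 hc) hs hF
    (summable_norm_div_mul_natCast_rpow hf0 hc hf)).tsum_eq, LSeries, ← tsum_mul_left]
  exact tsum_congr (Gamma_mul_div_mul_natCast_cpow hf0 hc)

end DirichletSeries

lemma summable_norm_mul_exp_neg_mul_of_norm_le_pow {E : Type*} [SeminormedAddCommGroup E]
    {a : ℕ → E} {k : ℕ} (ha : ∀ n, ‖a n‖ ≤ (n : ℝ) ^ k) {r : ℝ} (hr : 0 < r) :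
    Summable fun n : ℕ ↦ ‖a n‖ * Real.exp (-r * n) := by
  have hgeo := summable_pow_mul_geometric_of_norm_lt_one k (r := Real.exp (-r))
    (by rw [Real.norm_of_nonneg (Real.exp_pos _).le, Real.exp_lt_one_iff]; linarith)
  refine hgeo.of_nonneg_of_le (fun n ↦ by positivity) fun n ↦ ?_
  rw [← Real.exp_nat_mul, mul_comm (n : ℝ)]
  exact mul_le_mul_of_nonneg_right (ha n) (Real.exp_pos _).le

lemma LSeries.term_natCast_pow_mul (f : ℕ → ℂ) (k : ℕ) (s : ℂ) (n : ℕ) :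
    term (fun n ↦ (n : ℂ) ^ k * f n) s n = term f (s - k) n := by
  rcases eq_or_ne n 0 with rfl | hn
  · simp
  · have hn' : (n : ℂ) ≠ 0 := Nat.cast_ne_zero.mpr hn
    rw [term_of_ne_zero hn, term_of_ne_zero hn, cpow_sub _ _ hn', cpow_natCast]
    field_simp

lemma LSeriesSummable_natCast_pow_mul_iff {f : ℕ → ℂ} {k : ℕ} {s : ℂ} :
    LSeriesSummable (fun n ↦ (n : ℂ) ^ k * f n) s ↔ LSeriesSummable f (s - k) := by
  simp only [LSeriesSummable, funext (term_natCast_pow_mul f k s)]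

lemma LSeries_natCast_pow_mul (f : ℕ → ℂ) (k : ℕ) (s : ℂ) :
    LSeries (fun n ↦ (n : ℂ) ^ k * f n) s = LSeries f (s - k) := by
  simp only [LSeries, term_natCast_pow_mul]

lemma chiFour_zero : chiFour 0 = 0 := by simp [chiFour]

lemma norm_chiFour_le_one (n : ℕ) : ‖chiFour n‖ ≤ 1 := by
  unfold chiFour
  split_ifs <;> simp

lemma LSeriesSummable_chiFour {s : ℂ} (hs : 1 < s.re) : LSeriesSummable chiFour s :=
  LSeriesSummable_of_bounded_of_one_lt_re (fun n _ ↦ norm_chiFour_le_one n) hs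

lemma LSeries_chiFour (s : ℂ) : LSeries chiFour s = ∑' n : ℕ, chiFour n * (n : ℂ) ^ (-s) := by
  simp only [LSeries, term_def₀ chiFour_zero]

lemma eisensteinCoeff_zero : eisensteinCoeff 0 = 0 := by simp [eisensteinCoeff]

lemma eisensteinCoeff_eq_one_convolution :
    eisensteinCoeff = (1 : ℕ → ℂ) ⍟ fun n ↦ (n : ℂ) ^ 2 * chiFour n := by
  funext n
  rw [LSeries.convolution_def]
  simp only [Pi.one_apply, one_mul]
  exact (Nat.sum_divisorsAntidiagonal' (f := fun _ d ↦ (d : ℂ) ^ 2 * chiFour d)).symm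

lemma norm_eisensteinCoeff_le (n : ℕ) : ‖eisensteinCoeff n‖ ≤ (n : ℝ) ^ 3 :=
  calc ‖eisensteinCoeff n‖ ≤ ∑ _d ∈ n.divisors, (n : ℝ) ^ 2 := by
        refine norm_sum_le_of_le _ fun d hd ↦ ?_
        rw [norm_mul, norm_pow, norm_natCast]
        calc (d : ℝ) ^ 2 * ‖chiFour d‖ ≤ (d : ℝ) ^ 2 :=
              mul_le_of_le_one_right (by positivity) (norm_chiFour_le_one d)
          _ ≤ (n : ℝ) ^ 2 := by gcongr; exact_mod_cast Nat.divisor_le hd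
    _ = n.divisors.card * (n : ℝ) ^ 2 := by rw [Finset.sum_const, nsmul_eq_mul]
    _ ≤ n * (n : ℝ) ^ 2 := by gcongr; exact_mod_cast Nat.card_divisors_le_self n
    _ = (n : ℝ) ^ 3 := by ring

lemma LSeriesSummable_natCast_sq_mul_chiFour {s : ℂ} (hs : 3 < s.re) :
    LSeriesSummable (fun n ↦ (n : ℂ) ^ 2 * chiFour n) s :=
  LSeriesSummable_natCast_pow_mul_iff.mpr (LSeriesSummable_chiFour (by norm_num; linarith))

lemma LSeriesSummable_eisensteinCoeff {s : ℂ} (hs : 3 < s.re) :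
    LSeriesSummable eisensteinCoeff s :=
  eisensteinCoeff_eq_one_convolution ▸
    (LSeriesSummable_one_iff.mpr (by linarith)).convolution
      (LSeriesSummable_natCast_sq_mul_chiFour hs)

lemma LSeries_eisensteinCoeff {s : ℂ} (hs : 3 < s.re) :
    LSeries eisensteinCoeff s = riemannZeta s * LSeries chiFour (s - 2) := by
  rw [eisensteinCoeff_eq_one_convolution,
    LSeries_convolution' (LSeriesSummable_one_iff.mpr (by linarith))
      (LSeriesSummable_natCast_sq_mul_chiFour hs),
    LSeries_one_eq_riemannZeta (by linarith), LSeries_natCast_pow_mul]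
  norm_num

noncomputable def eisensteinQSeries (x : ℝ) : ℂ :=
  ∑' n : ℕ, eisensteinCoeff (n + 1) * Complex.exp (-2 * (Real.pi : ℂ) * ((n : ℂ) + 1) * (x : ℂ))

lemma hasSum_eisensteinQSeries {x : ℝ} (hx : 0 < x) :
    HasSum (fun n : ℕ ↦ eisensteinCoeff n * Real.exp (-(2 * Real.pi * n) * x))
      (eisensteinQSeries x) := by
  have hsum : Summable fun n : ℕ ↦ eisensteinCoeff n * Real.exp (-(2 * Real.pi * n) * x) := by
    refine Summable.of_norm ((summable_norm_mul_exp_neg_mul_of_norm_le_pow norm_eisensteinCoeff_le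
      (mul_pos Real.two_pi_pos hx)).congr fun n ↦ ?_)
    rw [norm_mul, norm_real, Real.norm_of_nonneg (Real.exp_pos _).le]
    ring_nf
  convert hsum.hasSum using 1
  rw [eisensteinQSeries, hsum.tsum_eq_zero_add, eisensteinCoeff_zero, zero_mul, zero_add]
  refine tsum_congr fun n ↦ ?_
  rw [ofReal_exp]
  push_cast
  ring_nf

/-- For `Re s > 3` the Mellin transform
`∫_0^∞ (Σ_{n≥1} c_n e^{−2πnx}) x^{s−1} dx` converges absolutely and equals
`(2π)^{−s}·Γ(s)·ζ(s)·L(χ, s−2)`, where `L(χ, s−2) = Σ_{n≥1} χ(n) n^{−(s−2)}`. -/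
theorem mellin_eisenstein (s : ℂ) (hs : 3 < s.re) :
    IntegrableOn
      (fun x : ℝ =>
        (∑' n : ℕ, eisensteinCoeff (n + 1) *
          Complex.exp (-2 * (Real.pi : ℂ) * ((n : ℂ) + 1) * (x : ℂ))) * (x : ℂ) ^ (s - 1))
      (Set.Ioi (0 : ℝ)) ∧
    (∫ x in Set.Ioi (0 : ℝ),
        (∑' n : ℕ, eisensteinCoeff (n + 1) *
          Complex.exp (-2 * (Real.pi : ℂ) * ((n : ℂ) + 1) * (x : ℂ))) * (x : ℂ) ^ (s - 1))
      = (2 * (Real.pi : ℂ)) ^ (-s) * Complex.Gamma s * riemannZeta s *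
          ∑' n : ℕ, chiFour n * (n : ℂ) ^ (-(s - 2)) := by
  have hs0 : 0 < s.re := by linarith
  have hF (t : ℝ) (ht : t ∈ Ioi 0) := hasSum_eisensteinQSeries ht
  have hL := LSeriesSummable_eisensteinCoeff hs
  refine ⟨?_, ?_⟩
  · exact (mellinConvergent_of_hasSum_LSeries eisensteinCoeff_zero Real.two_pi_pos hs0 hF
      hL).congr_fun (fun x _ ↦ mul_comm _ _) measurableSet_Ioi
  · calc _ = mellin eisensteinQSeries s :=
          setIntegral_congr_fun measurableSet_Ioi fun x _ ↦ mul_comm _ _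
      _ = _ := by
          rw [mellin_eq_cpow_mul_Gamma_mul_LSeries eisensteinCoeff_zero Real.two_pi_pos hs0 hF hL,
            LSeries_eisensteinCoeff hs, LSeries_chiFour]
          push_cast
          ring
end
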